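/- arXiv:1406.3387 — 5 statements merged into one kernel-verified Lean document; each statement's English description precedes it below -/
import Mathlib

section
/- Generalized Cheeger inequality (easy direction): for the generalized Laplacian L = (T D_W)^{-1/2}(D_W - W)(D_W T)^{-1/2} with τ_i ≥ 1, the second smallest eigenvalue λ₂ satisfies λ₂ ≤ 2 φ_L(G), where φ_L(G) = min over nonempty proper subsets S of cut_W(S, S̄) / min(vol_L(S), vol_L(S̄)). -/
/-!
Test the Rayleigh quotient of `L` on `u = (DT)^{1/2} y` with `y = 𝟙_S / vol S - 𝟙_{Sᶜ} / vol Sᶜ`.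
The weighted mean `∑ dᵢτᵢ yᵢ` vanishes, so `u` is orthogonal to `v₁ = (DT)^{1/2} 𝟙`. Conjugation by
`(DT)^{1/2}` turns the numerator into the Laplacian form `½ ∑ wᵢⱼ (yᵢ - yⱼ)²`, which equals
`(1/vol S + 1/vol Sᶜ)² cut(S, Sᶜ)`, and the denominator into `∑ dᵢτᵢ yᵢ² = 1/vol S + 1/vol Sᶜ`.
Hence `λ₂ ≤ (1/vol S + 1/vol Sᶜ) cut(S, Sᶜ) ≤ 2 cut(S, Sᶜ) / min (vol S) (vol Sᶜ)` for every `S`.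
-/

open Matrix

namespace GeneralizedCheeger

variable {ι : Type*} [Fintype ι]

theorem mul_dotProduct_eq_sum {R : Type*} [CommSemiring R] {s v : ι → R}
    (hsv : ∀ i, s i ^ 2 = v i) (y : ι → R) :
    (s * y) ⬝ᵥ s = ∑ i, v i * y i :=
  Finset.sum_congr rfl fun i _ => by rw [← hsv i, Pi.mul_apply]; ring

theorem mul_dotProduct_mul_eq_sum {R : Type*} [CommSemiring R] {s v : ι → R}
    (hsv : ∀ i, s i ^ 2 = v i) (y : ι → R) :
    (s * y) ⬝ᵥ (s * y) = ∑ i, v i * y i ^ 2 :=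
  Finset.sum_congr rfl fun i _ => by rw [← hsv i, Pi.mul_apply]; ring

variable [DecidableEq ι]

theorem dotProduct_conj_diagonal_mulVec {K : Type*} [Field K] (M : Matrix ι ι K) {s : ι → K}
    (hs : ∀ i, s i ≠ 0) (y : ι → K) :
    (s * y) ⬝ᵥ ((diagonal s⁻¹ * M * diagonal s⁻¹) *ᵥ (s * y)) = y ⬝ᵥ (M *ᵥ y) := by
  have hmulVec : diagonal s⁻¹ *ᵥ (s * y) = y := by ext i; simp [mulVec_diagonal, hs i]
  have hvecMul : (s * y) ᵥ* diagonal s⁻¹ = y := by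
    ext i; simp [vecMul_diagonal, mul_right_comm _ (y i), hs i]
  rw [← mulVec_mulVec, ← mulVec_mulVec, hmulVec, dotProduct_mulVec, hvecMul]

theorem dotProduct_laplacian_mulVec {W : Matrix ι ι ℝ} (hW : W.IsSymm) {d : ι → ℝ}
    (hd : ∀ i, d i = ∑ j, W i j) (y : ι → ℝ) :
    y ⬝ᵥ ((diagonal d - W) *ᵥ y) = (∑ i, ∑ j, W i j * (y i - y j) ^ 2) / 2 := by
  have hswap : ∑ i, ∑ j, W i j * y j ^ 2 = ∑ i, ∑ j, W i j * y i ^ 2 := by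
    rw [Finset.sum_comm]
    simp only [hW.apply]
  have hexpand : ∀ i j, W i j * (y i - y j) ^ 2
      = W i j * y i ^ 2 + W i j * y j ^ 2 - 2 * (y i * (W i j * y j)) := fun i j => by ring
  have hdiag : y ⬝ᵥ (diagonal d *ᵥ y) = ∑ i, ∑ j, W i j * y i ^ 2 := by
    simp only [dotProduct, mulVec_diagonal, hd, ← Finset.sum_mul]
    exact Finset.sum_congr rfl fun i _ => by ring
  rw [sub_mulVec, dotProduct_sub, hdiag]
  simp only [hexpand, Finset.sum_add_distrib, Finset.sum_sub_distrib, hswap, ← Finset.mul_sum]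
  simp only [dotProduct, mulVec]
  ring

theorem sum_compl_sum_eq_sum_sum_compl {R : Type*} [AddCommMonoid R] {W : Matrix ι ι R}
    (hW : W.IsSymm) (S : Finset ι) :
    ∑ i ∈ Sᶜ, ∑ j ∈ S, W i j = ∑ i ∈ S, ∑ j ∈ Sᶜ, W i j := by
  refine Finset.sum_comm.trans ?_
  simp only [hW.apply]

theorem sum_mul_ite_mem {R : Type*} [NonUnitalNonAssocSemiring R] (v : ι → R) (S : Finset ι)
    (a b : R) :
    ∑ i, v i * (if i ∈ S then a else b) = (∑ i ∈ S, v i) * a + (∑ i ∈ Sᶜ, v i) * b := by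
  rw [← Finset.sum_add_sum_compl S, Finset.sum_mul, Finset.sum_mul]
  congr 1 <;> refine Finset.sum_congr rfl fun i hi => ?_
  · rw [if_pos hi]
  · rw [if_neg (Finset.mem_compl.mp hi)]

theorem sum_sum_mul_sub_ite_mem_sq {R : Type*} [CommRing R] (W : Matrix ι ι R) (S : Finset ι)
    (a b : R) :
    ∑ i, ∑ j, W i j * ((if i ∈ S then a else b) - if j ∈ S then a else b) ^ 2
      = (a - b) ^ 2 * (∑ i ∈ S, ∑ j ∈ Sᶜ, W i j + ∑ i ∈ Sᶜ, ∑ j ∈ S, W i j) := by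
  have hin : ∀ i ∈ S, ∑ j, W i j * ((if i ∈ S then a else b) - if j ∈ S then a else b) ^ 2
      = (a - b) ^ 2 * ∑ j ∈ Sᶜ, W i j := by
    intro i hi
    rw [← Finset.sum_add_sum_compl S, Finset.sum_eq_zero fun j hj => by simp [hi, hj],
      zero_add, Finset.mul_sum]
    exact Finset.sum_congr rfl fun j hj => by simp [hi, Finset.mem_compl.mp hj]; ring
  have hout : ∀ i ∈ Sᶜ, ∑ j, W i j * ((if i ∈ S then a else b) - if j ∈ S then a else b) ^ 2
      = (a - b) ^ 2 * ∑ j ∈ S, W i j := by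
    intro i hi
    rw [Finset.mem_compl] at hi
    rw [← Finset.sum_add_sum_compl S,
      Finset.sum_eq_zero (s := Sᶜ) fun j hj => by simp [hi, Finset.mem_compl.mp hj],
      add_zero, Finset.mul_sum]
    exact Finset.sum_congr rfl fun j hj => by simp [hj, hi]; ring
  rw [← Finset.sum_add_sum_compl S, Finset.sum_congr rfl hin, Finset.sum_congr rfl hout,
    ← Finset.mul_sum, ← Finset.mul_sum, mul_add]

theorem inv_add_inv_mul_le_two_mul_div_min {K : Type*} [Field K] [LinearOrder K]
    [IsStrictOrderedRing K] {a b c : K} (ha : 0 < a) (hb : 0 < b) (hc : 0 ≤ c) :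
    (a⁻¹ + b⁻¹) * c ≤ 2 * (c / min a b) := by
  have hmin : 0 < min a b := lt_min ha hb
  have ha' : a⁻¹ ≤ (min a b)⁻¹ := inv_anti₀ hmin (min_le_left a b)
  have hb' : b⁻¹ ≤ (min a b)⁻¹ := inv_anti₀ hmin (min_le_right a b)
  rw [div_eq_mul_inv, mul_comm c, ← mul_assoc, two_mul]
  exact mul_le_mul_of_nonneg_right (add_le_add ha' hb') hc

noncomputable def cheegerTestVector (v : ι → ℝ) (S : Finset ι) : ι → ℝ :=
  fun i => if i ∈ S then (∑ j ∈ S, v j)⁻¹ else -(∑ j ∈ Sᶜ, v j)⁻¹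

section TestVector

variable {v : ι → ℝ} {S : Finset ι}

theorem sum_mul_cheegerTestVector (hS : ∑ i ∈ S, v i ≠ 0) (hSc : ∑ i ∈ Sᶜ, v i ≠ 0) :
    ∑ i, v i * cheegerTestVector v S i = 0 := by
  simp only [cheegerTestVector, sum_mul_ite_mem, mul_inv_cancel₀ hS, mul_neg,
    mul_inv_cancel₀ hSc, add_neg_cancel]

theorem sum_mul_cheegerTestVector_sq (hS : ∑ i ∈ S, v i ≠ 0) (hSc : ∑ i ∈ Sᶜ, v i ≠ 0) :
    ∑ i, v i * cheegerTestVector v S i ^ 2 = (∑ i ∈ S, v i)⁻¹ + (∑ i ∈ Sᶜ, v i)⁻¹ := by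
  simp only [cheegerTestVector, ite_pow, sum_mul_ite_mem]
  field_simp

theorem sum_sum_mul_sub_cheegerTestVector_sq (W : Matrix ι ι ℝ) :
    ∑ i, ∑ j, W i j * (cheegerTestVector v S i - cheegerTestVector v S j) ^ 2
      = ((∑ i ∈ S, v i)⁻¹ + (∑ i ∈ Sᶜ, v i)⁻¹) ^ 2
        * (∑ i ∈ S, ∑ j ∈ Sᶜ, W i j + ∑ i ∈ Sᶜ, ∑ j ∈ S, W i j) := by
  rw [← sub_neg_eq_add]
  exact sum_sum_mul_sub_ite_mem_sq W S _ _

variable {s : ι → ℝ}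

theorem mul_cheegerTestVector_ne_zero (hs : ∀ i, s i ≠ 0) (hv : ∀ i, 0 < v i)
    (hS : S.Nonempty) : s * cheegerTestVector v S ≠ 0 := by
  obtain ⟨i, hi⟩ := hS
  have hvolS : 0 < ∑ j ∈ S, v j := Finset.sum_pos (fun j _ => hv j) ⟨i, hi⟩
  refine Function.ne_iff.mpr ⟨i, ?_⟩
  simp only [Pi.mul_apply, cheegerTestVector, if_pos hi, Pi.zero_apply]
  exact mul_ne_zero (hs i) (inv_ne_zero hvolS.ne')

theorem rayleigh_quotient_cheegerTestVector {W : Matrix ι ι ℝ} (hW : W.IsSymm) {d : ι → ℝ}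
    (hd : ∀ i, d i = ∑ j, W i j) (hsv : ∀ i, s i ^ 2 = v i) (hs : ∀ i, s i ≠ 0)
    (hS : 0 < ∑ i ∈ S, v i) (hSc : 0 < ∑ i ∈ Sᶜ, v i) :
    (s * cheegerTestVector v S) ⬝ᵥ
        ((diagonal s⁻¹ * (diagonal d - W) * diagonal s⁻¹) *ᵥ (s * cheegerTestVector v S)) /
      ((s * cheegerTestVector v S) ⬝ᵥ (s * cheegerTestVector v S))
      = ((∑ i ∈ S, v i)⁻¹ + (∑ i ∈ Sᶜ, v i)⁻¹) * ∑ i ∈ S, ∑ j ∈ Sᶜ, W i j := by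
  rw [dotProduct_conj_diagonal_mulVec _ hs, dotProduct_laplacian_mulVec hW hd,
    sum_sum_mul_sub_cheegerTestVector_sq, sum_compl_sum_eq_sum_sum_compl hW,
    mul_dotProduct_mul_eq_sum hsv, sum_mul_cheegerTestVector_sq hS.ne' hSc.ne']
  have hvol : (∑ i ∈ S, v i)⁻¹ + (∑ i ∈ Sᶜ, v i)⁻¹ ≠ 0 := by positivity
  field_simp
  ring

end TestVector

end GeneralizedCheeger

open GeneralizedCheeger in
theorem generalized_cheeger_easy_general
    {n : ℕ} (W : Matrix (Fin n) (Fin n) ℝ) (hWsymm : W.IsSymm)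
    (hWnn : ∀ i j, 0 ≤ W i j) (d τ : Fin n → ℝ)
    (hd : ∀ i, d i = ∑ j, W i j) (hdpos : ∀ i, 0 < d i) (hτ : ∀ i, 1 ≤ τ i)
    (L : Matrix (Fin n) (Fin n) ℝ)
    (hL : L = Matrix.diagonal (fun i => (Real.sqrt (d i * τ i))⁻¹) *
        (Matrix.diagonal d - W) *
        Matrix.diagonal (fun i => (Real.sqrt (d i * τ i))⁻¹))
    (lam2 : ℝ)
    (hlam2 : IsGLB {r : ℝ | ∃ u : Fin n → ℝ, u ≠ 0 ∧
        (u ⬝ᵥ fun i => Real.sqrt (d i * τ i)) = 0 ∧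
        r = (u ⬝ᵥ (L *ᵥ u)) / (u ⬝ᵥ u)} lam2)
    (φ : ℝ)
    (hφ : IsGLB {r : ℝ | ∃ S : Finset (Fin n), S.Nonempty ∧ S ≠ Finset.univ ∧
        r = (∑ i ∈ S, ∑ j ∈ Sᶜ, W i j) /
          min (∑ i ∈ S, d i * τ i) (∑ i ∈ Sᶜ, d i * τ i)} φ) :
    lam2 ≤ 2 * φ := by
  set v : Fin n → ℝ := fun i => d i * τ i
  set s : Fin n → ℝ := fun i => Real.sqrt (v i)
  have hv : ∀ i, 0 < v i := fun i => mul_pos (hdpos i) (one_pos.trans_le (hτ i))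
  have hsv : ∀ i, s i ^ 2 = v i := fun i => Real.sq_sqrt (hv i).le
  have hs : ∀ i, s i ≠ 0 := fun i => (Real.sqrt_pos.mpr (hv i)).ne'
  suffices h : lam2 / 2 ≤ φ by linarith
  refine hφ.2 ?_
  rintro _ ⟨S, hS, hSuniv, rfl⟩
  have hSc : Sᶜ.Nonempty := by rwa [← Finset.compl_ne_univ_iff_nonempty, compl_compl]
  have hvolS : 0 < ∑ i ∈ S, v i := Finset.sum_pos (fun i _ => hv i) hS
  have hvolSc : 0 < ∑ i ∈ Sᶜ, v i := Finset.sum_pos (fun i _ => hv i) hSc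
  have hcut : 0 ≤ ∑ i ∈ S, ∑ j ∈ Sᶜ, W i j :=
    Finset.sum_nonneg fun i _ => Finset.sum_nonneg fun j _ => hWnn i j
  have hlam2_le : lam2 ≤ ((∑ i ∈ S, v i)⁻¹ + (∑ i ∈ Sᶜ, v i)⁻¹) * ∑ i ∈ S, ∑ j ∈ Sᶜ, W i j :=
    hlam2.1 ⟨s * cheegerTestVector v S, mul_cheegerTestVector_ne_zero hs hv hS,
      (mul_dotProduct_eq_sum hsv _).trans (sum_mul_cheegerTestVector hvolS.ne' hvolSc.ne'),
      by rw [hL]; exact (rayleigh_quotient_cheegerTestVector hWsymm hd hsv hs hvolS hvolSc).symm⟩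
  linarith [inv_add_inv_mul_le_two_mul_div_min hvolS hvolSc hcut]

/-- generalized Cheeger inequality, easy direction: `λ₂ ≤ 2 φ_L(G)`,
where `λ₂` is the second smallest eigenvalue of `L` (characterized via the Rayleigh
quotient over vectors orthogonal to the kernel eigenvector `v₁ i = sqrt(d_i τ_i)`),
and `φ_L(G)` is the minimal generalized conductance over nonempty proper subsets. -/
theorem generalized_cheeger_easy
    {n : ℕ} (hn : 1 < n) (W : Matrix (Fin n) (Fin n) ℝ) (hWsymm : W.IsSymm)
    (hWnn : ∀ i j, 0 ≤ W i j) (d τ : Fin n → ℝ)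
    (hd : ∀ i, d i = ∑ j, W i j) (hdpos : ∀ i, 0 < d i) (hτ : ∀ i, 1 ≤ τ i)
    (L : Matrix (Fin n) (Fin n) ℝ)
    (hL : L = Matrix.diagonal (fun i => (Real.sqrt (d i * τ i))⁻¹) *
        (Matrix.diagonal d - W) *
        Matrix.diagonal (fun i => (Real.sqrt (d i * τ i))⁻¹))
    (lam2 : ℝ)
    (hlam2 : IsGLB {r : ℝ | ∃ u : Fin n → ℝ, u ≠ 0 ∧
        (u ⬝ᵥ fun i => Real.sqrt (d i * τ i)) = 0 ∧
        r = (u ⬝ᵥ (L *ᵥ u)) / (u ⬝ᵥ u)} lam2)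
    (φ : ℝ)
    (hφ : IsGLB {r : ℝ | ∃ S : Finset (Fin n), S.Nonempty ∧ S ≠ Finset.univ ∧
        r = (∑ i ∈ S, ∑ j ∈ Sᶜ, W i j) /
          min (∑ i ∈ S, d i * τ i) (∑ i ∈ Sᶜ, d i * τ i)} φ) :
    lam2 ≤ 2 * φ :=
  generalized_cheeger_easy_general W hWsymm hWnn d τ hd hdpos hτ L hL lam2 hlam2 φ hφ
end

section
/- Generalized Cheeger inequality (hard direction): for the generalized Laplacian L = (T D_W)^{-1/2}(D_W - W)(D_W T)^{-1/2} with τ_i ≥ 1 for all i, the second smallest eigenvalue λ₂ satisfies φ_L(G)²/2 ≤ λ₂, where φ_L(G) is the generalized conductance of the graph. -/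
/-!
Put `μ i = d i * τ i` and write `u i = √(μ i) * f i`. Then `u ⬝ᵥ L *ᵥ u = E(f) / 2` with
`E(f) = ∑ W i j (f i - f j)²`, `u ⬝ᵥ u = D(f) = ∑ μ i f i²`, and `u ⊥ √μ` becomes `∑ μ i f i = 0`.
Shifting `f` by a `μ`-weighted median leaves `E` unchanged and only increases `D`. After the
shift, either the positive or the negative part `h` satisfies `E(h)/D(h) ≤ E(f)/D(f)`, and the
support of `h` carries at most half of the total mass.

Some level set `S` of `h²` satisfies `cut(S) ≤ √(E(h)/D(h)) μ(S)`. Peeling `h²` layer by layer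
writes `∑ μ i h i²` and `∑ W i j (h i² - h j²)⁺` as the same nonnegative combination, over the
level sets, of the `μ(S)` and of the `cut(S)` respectively. The second sum is at most
`√(E(h) D(h))` by Cauchy–Schwarz and `∑ j, W i j ≤ μ i`, which is where `τ ≥ 1` enters. Since
`μ(S) ≤ μ(Sᶜ)`, this gives `φ ≤ √(E(f)/D(f))`.
-/

open Matrix Finset

namespace GeneralizedCheeger

variable {ι : Type*} [Fintype ι] {W : Matrix ι ι ℝ} {μ : ι → ℝ}

def cutWeight [DecidableEq ι] (W : Matrix ι ι ℝ) (S : Finset ι) : ℝ :=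
  ∑ i ∈ S, ∑ j ∈ Sᶜ, W i j

def dirichletEnergy (W : Matrix ι ι ℝ) (f : ι → ℝ) : ℝ :=
  ∑ i, ∑ j, W i j * (f i - f j) ^ 2

def weightedSqNorm (μ f : ι → ℝ) : ℝ :=
  ∑ i, μ i * f i ^ 2

def posVariation (W : Matrix ι ι ℝ) (x : ι → ℝ) : ℝ :=
  ∑ i, ∑ j, W i j * (x i - x j)⁺

theorem cutWeight_nonneg [DecidableEq ι] (hW : ∀ i j, 0 ≤ W i j) (S : Finset ι) :
    0 ≤ cutWeight W S :=
  sum_nonneg fun i _ => sum_nonneg fun j _ => hW i j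

theorem dirichletEnergy_nonneg (hW : ∀ i j, 0 ≤ W i j) (f : ι → ℝ) : 0 ≤ dirichletEnergy W f :=
  sum_nonneg fun i _ => sum_nonneg fun j _ => mul_nonneg (hW i j) (sq_nonneg _)

theorem weightedSqNorm_nonneg (hμ : ∀ i, 0 ≤ μ i) (f : ι → ℝ) : 0 ≤ weightedSqNorm μ f :=
  sum_nonneg fun i _ => mul_nonneg (hμ i) (sq_nonneg _)

theorem weightedSqNorm_pos (hμ : ∀ i, 0 < μ i) {f : ι → ℝ} (hf : f ≠ 0) :
    0 < weightedSqNorm μ f := by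
  obtain ⟨i, hi⟩ := Function.ne_iff.1 hf
  exact sum_pos' (fun j _ => mul_nonneg (hμ j).le (sq_nonneg _))
    ⟨i, mem_univ i, mul_pos (hμ i) (pow_two_pos_of_ne_zero hi)⟩

def laplacian [DecidableEq ι] (W : Matrix ι ι ℝ) : Matrix ι ι ℝ :=
  diagonal (fun i => ∑ j, W i j) - W

theorem dirichletEnergy_eq_two_mul_dotProduct_laplacian_mulVec [DecidableEq ι] (hWs : W.IsSymm)
    (f : ι → ℝ) : dirichletEnergy W f = 2 * (f ⬝ᵥ laplacian W *ᵥ f) := by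
  have hswap : ∑ i, ∑ j, W i j * f j ^ 2 = ∑ i, ∑ j, W i j * f i ^ 2 := by
    rw [sum_comm]; simp only [hWs.apply]
  have hquad : f ⬝ᵥ laplacian W *ᵥ f =
      ∑ i, ∑ j, W i j * f i ^ 2 - ∑ i, ∑ j, W i j * (f i * f j) := by
    rw [laplacian, sub_mulVec, dotProduct_sub]
    simp only [dotProduct, mulVec_diagonal]
    simp only [mulVec, dotProduct, mul_sum, sum_mul]
    congr 1 <;> exact sum_congr rfl fun i _ => sum_congr rfl fun j _ => by ring
  have hexpand : ∀ i j, W i j * (f i - f j) ^ 2 =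
      W i j * f i ^ 2 + W i j * f j ^ 2 - 2 * (W i j * (f i * f j)) := fun i j => by ring
  simp only [dirichletEnergy, hexpand, sum_sub_distrib, sum_add_distrib, hswap, hquad, ← mul_sum]
  ring

theorem dotProduct_diagonal_mul_laplacian_mul_diagonal_mulVec [DecidableEq ι] (hWs : W.IsSymm)
    (a u : ι → ℝ) :
    u ⬝ᵥ (diagonal a * laplacian W * diagonal a) *ᵥ u =
      dirichletEnergy W (fun i => a i * u i) / 2 := by
  have hdiag : ∀ w : ι → ℝ, diagonal a *ᵥ w = fun i => a i * w i :=
    fun w => funext (mulVec_diagonal a w)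
  rw [dirichletEnergy_eq_two_mul_dotProduct_laplacian_mulVec hWs, mul_div_cancel_left₀ _ two_ne_zero,
    ← mulVec_mulVec, ← mulVec_mulVec, hdiag, hdiag]
  simp only [dotProduct, mul_left_comm, mul_assoc]

theorem weightedSqNorm_inv_sqrt_mul (hμ : ∀ i, 0 < μ i) (u : ι → ℝ) :
    weightedSqNorm μ (fun i => (√(μ i))⁻¹ * u i) = u ⬝ᵥ u := by
  refine sum_congr rfl fun i _ => ?_
  rw [mul_pow, inv_pow, Real.sq_sqrt (hμ i).le, ← mul_assoc, mul_inv_cancel₀ (hμ i).ne', one_mul,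
    sq]

theorem sum_mul_inv_sqrt_mul (hμ : ∀ i, 0 < μ i) (u : ι → ℝ) :
    ∑ i, μ i * ((√(μ i))⁻¹ * u i) = u ⬝ᵥ fun i => √(μ i) := by
  refine sum_congr rfl fun i _ => ?_
  have hsqrt : √(μ i) ≠ 0 := (Real.sqrt_pos.2 (hμ i)).ne'
  nth_rewrite 1 [← Real.mul_self_sqrt (hμ i).le]
  field_simp

theorem exists_weighted_median (f μ : ι → ℝ) (hμ : ∀ i, 0 ≤ μ i) :
    ∃ c : ℝ, 2 * ∑ i ∈ univ.filter (f · < c), μ i ≤ ∑ i, μ i ∧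
      2 * ∑ i ∈ univ.filter (c < f ·), μ i ≤ ∑ i, μ i := by
  rcases isEmpty_or_nonempty ι with hι | hι
  · exact ⟨0, by simp⟩
  have hμ_sum : 0 ≤ ∑ i, μ i := sum_nonneg fun i _ => hμ i
  -- `c` is the least value of `f` whose sublevel set carries at least half of the mass.
  set A := univ.filter fun k => ∑ i, μ i ≤ 2 * ∑ i ∈ univ.filter (f · ≤ f k), μ i
  have hA : A.Nonempty := by
    obtain ⟨k, -, hk⟩ := univ.exists_max_image f univ_nonempty
    refine ⟨k, mem_filter.2 ⟨mem_univ k, ?_⟩⟩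
    rw [filter_true_of_mem fun i _ => hk i (mem_univ i)]
    linarith
  obtain ⟨k, hkA, hkmin⟩ := A.exists_min_image f hA
  refine ⟨f k, ?_, ?_⟩
  · by_contra! hlt
    have hne : (univ.filter (f · < f k)).Nonempty := by
      by_contra! hemp
      rw [hemp, sum_empty] at hlt
      linarith
    obtain ⟨j, hj, hjmax⟩ := (univ.filter (f · < f k)).exists_max_image f hne
    have hjA : j ∈ A := by
      refine mem_filter.2 ⟨mem_univ j, hlt.le.trans ?_⟩
      gcongr 2 * ?_
      refine sum_le_sum_of_subset_of_nonneg (fun i hi => ?_) fun i _ _ => hμ i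
      exact mem_filter.2 ⟨mem_univ i, hjmax i hi⟩
    exact (mem_filter.1 hj).2.not_ge (hkmin j hjA)
  · have hsplit := sum_filter_add_sum_filter_not univ (f · ≤ f k) μ
    simp only [not_le] at hsplit
    linarith [(mem_filter.1 hkA).2]

theorem dirichletEnergy_sub_const (W : Matrix ι ι ℝ) (f : ι → ℝ) (c : ℝ) :
    dirichletEnergy W (fun i => f i - c) = dirichletEnergy W f := by
  simp only [dirichletEnergy, sub_sub_sub_cancel_right]

theorem weightedSqNorm_sub_const {f : ι → ℝ} (hf : ∑ i, μ i * f i = 0) (c : ℝ) :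
    weightedSqNorm μ (fun i => f i - c) = weightedSqNorm μ f + c ^ 2 * ∑ i, μ i := by
  have hexpand : ∀ i, μ i * (f i - c) ^ 2 = μ i * f i ^ 2 - 2 * c * (μ i * f i) + c ^ 2 * μ i :=
    fun i => by ring
  simp only [weightedSqNorm, hexpand, sum_add_distrib, sum_sub_distrib, ← mul_sum, hf]
  ring

theorem sq_posPart_sub_add_sq_negPart_sub_le (a b : ℝ) :
    (a⁺ - b⁺) ^ 2 + (a⁻ - b⁻) ^ 2 ≤ (a - b) ^ 2 := by
  rcases le_total a 0 with ha | ha <;> rcases le_total b 0 with hb | hb <;>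
    simp only [posPart_def, negPart_def, ha, hb, sup_of_le_left, sup_of_le_right, neg_nonneg,
      neg_nonpos] <;>
    nlinarith

theorem dirichletEnergy_posPart_add_negPart_le (hW : ∀ i j, 0 ≤ W i j) (g : ι → ℝ) :
    dirichletEnergy W g⁺ + dirichletEnergy W g⁻ ≤ dirichletEnergy W g := by
  simp only [dirichletEnergy, ← sum_add_distrib, ← mul_add, Pi.posPart_apply, Pi.negPart_apply]
  gcongr with i _ j _
  · exact hW i j
  · exact sq_posPart_sub_add_sq_negPart_sub_le _ _

theorem weightedSqNorm_posPart_add_negPart (μ g : ι → ℝ) :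
    weightedSqNorm μ g⁺ + weightedSqNorm μ g⁻ = weightedSqNorm μ g := by
  simp only [weightedSqNorm, ← sum_add_distrib, ← mul_add, Pi.posPart_apply, Pi.negPart_apply]
  refine sum_congr rfl fun i _ => ?_
  rcases le_total (g i) 0 with h | h <;> simp [h]

theorem pos_and_div_le_add_div_add_or {a₁ a₂ b₁ b₂ : ℝ} (ha₁ : 0 ≤ a₁) (ha₂ : 0 ≤ a₂)
    (hb₁ : 0 ≤ b₁) (hb₂ : 0 ≤ b₂) (hb : 0 < b₁ + b₂) :
    (0 < b₁ ∧ a₁ / b₁ ≤ (a₁ + a₂) / (b₁ + b₂)) ∨ (0 < b₂ ∧ a₂ / b₂ ≤ (a₁ + a₂) / (b₁ + b₂)) := by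
  rcases hb₁.eq_or_lt with rfl | hb₁
  · rw [zero_add] at hb ⊢
    exact Or.inr ⟨hb, by gcongr; linarith⟩
  rcases hb₂.eq_or_lt with rfl | hb₂
  · rw [add_zero]
    exact Or.inl ⟨hb₁, by gcongr; linarith⟩
  by_contra! h
  have h₁ := (div_lt_div_iff₀ hb hb₁).1 (h.1 hb₁)
  have h₂ := (div_lt_div_iff₀ hb hb₂).1 (h.2 hb₂)
  nlinarith

theorem exists_posPart_or_negPart_div_le (hW : ∀ i j, 0 ≤ W i j) (hμ : ∀ i, 0 ≤ μ i)
    {g : ι → ℝ} (hg : 0 < weightedSqNorm μ g) :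
    ∃ h, (h = g⁺ ∨ h = g⁻) ∧ 0 < weightedSqNorm μ h ∧
      dirichletEnergy W h / weightedSqNorm μ h ≤ dirichletEnergy W g / weightedSqNorm μ g := by
  have hsplit := weightedSqNorm_posPart_add_negPart μ g
  have hmediant := pos_and_div_le_add_div_add_or (dirichletEnergy_nonneg hW g⁺)
    (dirichletEnergy_nonneg hW g⁻) (weightedSqNorm_nonneg hμ g⁺) (weightedSqNorm_nonneg hμ g⁻)
    (hsplit ▸ hg)
  rw [hsplit] at hmediant
  have hE : (dirichletEnergy W g⁺ + dirichletEnergy W g⁻) / weightedSqNorm μ g ≤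
      dirichletEnergy W g / weightedSqNorm μ g := by
    gcongr; exact dirichletEnergy_posPart_add_negPart_le hW g
  rcases hmediant with ⟨hpos, hle⟩ | ⟨hpos, hle⟩
  · exact ⟨g⁺, Or.inl rfl, hpos, hle.trans hE⟩
  · exact ⟨g⁻, Or.inr rfl, hpos, hle.trans hE⟩

theorem exists_half_support_div_le (hW : ∀ i j, 0 ≤ W i j) (hμ : ∀ i, 0 < μ i) {f : ι → ℝ}
    (hf : ∑ i, μ i * f i = 0) (hf0 : f ≠ 0) :
    ∃ h : ι → ℝ, h ≠ 0 ∧ 2 * ∑ i ∈ univ.filter (h · ≠ 0), μ i ≤ ∑ i, μ i ∧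
      dirichletEnergy W h / weightedSqNorm μ h ≤ dirichletEnergy W f / weightedSqNorm μ f := by
  obtain ⟨c, hbelow, habove⟩ := exists_weighted_median f μ fun i => (hμ i).le
  set g := fun i => f i - c
  have hDf := weightedSqNorm_pos hμ hf0
  have hDg : weightedSqNorm μ f ≤ weightedSqNorm μ g := by
    rw [weightedSqNorm_sub_const hf]
    have := sum_nonneg fun i (_ : i ∈ univ) => (hμ i).le
    nlinarith
  have hratio : dirichletEnergy W g / weightedSqNorm μ g ≤
      dirichletEnergy W f / weightedSqNorm μ f := by
    rw [dirichletEnergy_sub_const]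
    exact div_le_div_of_nonneg_left (dirichletEnergy_nonneg hW f) hDf hDg
  obtain ⟨h, hgh, hDh, hh⟩ :=
    exists_posPart_or_negPart_div_le hW (fun i => (hμ i).le) (hDf.trans_le hDg)
  obtain ⟨T, hT, hhT⟩ : ∃ T : Finset ι, 2 * ∑ i ∈ T, μ i ≤ ∑ i, μ i ∧
      univ.filter (h · ≠ 0) ⊆ T := by
    rcases hgh with rfl | rfl
    · exact ⟨_, habove, fun i hi => by simpa [g, posPart_eq_zero] using hi⟩
    · exact ⟨_, hbelow, fun i hi => by simpa [g, negPart_eq_zero] using hi⟩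
  have hsupp : 2 * ∑ i ∈ univ.filter (h · ≠ 0), μ i ≤ ∑ i, μ i :=
    le_trans (by gcongr 2 * ?_; exact sum_le_sum_of_subset_of_nonneg hhT fun i _ _ => (hμ i).le) hT
  refine ⟨h, fun h0 => hDh.ne' ?_, hsupp, hh.trans hratio⟩
  simp [h0, weightedSqNorm]

theorem sum_mul_eq_mul_sum_support_add {x : ι → ℝ} {m : ℝ} (hm : 0 < m)
    (hmx : ∀ i, x i ≠ 0 → m ≤ x i) (μ : ι → ℝ) :
    ∑ i, μ i * x i = m * ∑ i ∈ univ.filter (x · ≠ 0), μ i + ∑ i, μ i * (x i - m)⁺ := by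
  rw [sum_filter, mul_sum, ← sum_add_distrib]
  refine sum_congr rfl fun i _ => ?_
  by_cases hi : x i = 0
  · simp [hi, hm.le]
  · simp [hi, hmx i hi]; ring

theorem posVariation_eq_mul_cutWeight_add [DecidableEq ι] {x : ι → ℝ} {m : ℝ} (hx : 0 ≤ x)
    (hm : 0 < m) (hmx : ∀ i, x i ≠ 0 → m ≤ x i) (W : Matrix ι ι ℝ) :
    posVariation W x =
      m * cutWeight W (univ.filter (x · ≠ 0)) + posVariation W (fun i => (x i - m)⁺) := by
  simp only [posVariation, cutWeight, compl_filter, sum_filter, mul_sum, ← sum_add_distrib]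
  refine sum_congr rfl fun i _ => ?_
  by_cases hi : x i = 0
  · simp only [hi, ne_eq, not_true_eq_false, if_false, mul_zero, zero_add]
    refine sum_congr rfl fun j _ => ?_
    have hxj : 0 ≤ x j := hx j
    simp [hm.le, hxj]
  · simp only [hi, ne_eq, not_false_eq_true, if_true, mul_sum, not_not, ← sum_add_distrib]
    refine sum_congr rfl fun j _ => ?_
    have hmi := hmx i hi
    by_cases hj : x j = 0
    · simp [hj, hm.le, hmi, (hm.trans_le hmi).le]; ring
    · simp [hj, hmi, hmx j hj]

theorem mul_sum_lt_posVariation [DecidableEq ι] {c : ℝ} {x : ι → ℝ} (hx : 0 ≤ x) (hx0 : x ≠ 0)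
    (hcut : ∀ S : Finset ι, S.Nonempty → (∀ i ∈ S, x i ≠ 0) →
      c * ∑ i ∈ S, μ i < cutWeight W S) :
    c * ∑ i, μ i * x i < posVariation W x := by
  induction hk : #(univ.filter (x · ≠ 0)) using Nat.strong_induction_on generalizing x with
  | _ k ih =>
  set S := univ.filter (x · ≠ 0)
  have hS : S.Nonempty := by
    obtain ⟨i, hi⟩ := Function.ne_iff.1 hx0
    exact ⟨i, mem_filter.2 ⟨mem_univ i, hi⟩⟩
  -- Peel off the bottom layer `x i₀` on `S`; what remains has strictly smaller support.
  obtain ⟨i₀, hi₀, hmin⟩ := S.exists_min_image x hS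
  have hi₀ : x i₀ ≠ 0 := (mem_filter.1 hi₀).2
  have hm : 0 < x i₀ := (hx i₀).lt_of_ne' hi₀
  have hmx : ∀ i, x i ≠ 0 → x i₀ ≤ x i := fun i hi => hmin i (mem_filter.2 ⟨mem_univ i, hi⟩)
  set x' := fun i => (x i - x i₀)⁺
  have hx'x : ∀ i, x' i ≠ 0 → x i ≠ 0 := fun i hi hxi => hi (by simp [x', hxi, hm.le])
  have hrest : c * ∑ i, μ i * x' i ≤ posVariation W x' := by
    by_cases hx'0 : x' = 0
    · simp [hx'0, posVariation]
    refine (ih _ ?_ (fun i => posPart_nonneg _) hx'0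
      (fun T hT hTx' => hcut T hT fun i hi => hx'x i (hTx' i hi)) rfl).le
    refine hk ▸ card_lt_card ⟨fun i hi => ?_, fun hsub => ?_⟩
    · exact mem_filter.2 ⟨mem_univ i, hx'x i (mem_filter.1 hi).2⟩
    · exact (mem_filter.1 (hsub (mem_filter.2 ⟨mem_univ i₀, hi₀⟩))).2 (by simp)
  calc c * ∑ i, μ i * x i = x i₀ * (c * ∑ i ∈ S, μ i) + c * ∑ i, μ i * x' i := by
        rw [sum_mul_eq_mul_sum_support_add hm hmx]; ring
    _ < x i₀ * cutWeight W S + posVariation W x' :=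
        add_lt_add_of_lt_of_le
          (mul_lt_mul_of_pos_left (hcut S hS fun i hi => (mem_filter.1 hi).2) hm) hrest
    _ = posVariation W x := (posVariation_eq_mul_cutWeight_add hx hm hmx W).symm

theorem two_mul_posVariation (hWs : W.IsSymm) (x : ι → ℝ) :
    2 * posVariation W x = ∑ i, ∑ j, W i j * |x i - x j| := by
  have hswap : posVariation W x = ∑ i, ∑ j, W i j * (x i - x j)⁻ := by
    rw [posVariation, sum_comm]
    simp only [hWs.apply, ← negPart_neg, neg_sub]
  rw [two_mul]
  nth_rewrite 2 [hswap]
  simp only [posVariation, ← sum_add_distrib, ← mul_add, posPart_add_negPart]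

theorem sum_sum_mul_sq_add_sq_le (hWs : W.IsSymm) (hdeg : ∀ i, ∑ j, W i j ≤ μ i)
    (h : ι → ℝ) : ∑ i, ∑ j, W i j * (h i ^ 2 + h j ^ 2) ≤ 2 * weightedSqNorm μ h := by
  have hswap : ∑ i, ∑ j, W i j * h j ^ 2 = ∑ i, ∑ j, W i j * h i ^ 2 := by
    rw [sum_comm]; simp only [hWs.apply]
  simp only [mul_add, sum_add_distrib, hswap, ← sum_mul, weightedSqNorm]
  rw [← two_mul]
  gcongr with i
  exact hdeg i

theorem posVariation_sq_le (hWs : W.IsSymm) (hW : ∀ i j, 0 ≤ W i j)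
    (hdeg : ∀ i, ∑ j, W i j ≤ μ i) (h : ι → ℝ) :
    posVariation W (fun i => h i ^ 2) ^ 2 ≤ dirichletEnergy W h * weightedSqNorm μ h := by
  have hCS : (∑ i, ∑ j, W i j * |h i ^ 2 - h j ^ 2|) ^ 2 ≤
      dirichletEnergy W h * ∑ i, ∑ j, 2 * (W i j * (h i ^ 2 + h j ^ 2)) := by
    simp only [dirichletEnergy, ← Fintype.sum_prod_type']
    refine sum_sq_le_sum_mul_sum_of_sq_le_mul _ (fun p _ => mul_nonneg (hW _ _) (sq_nonneg _))
      (fun p _ => by have := hW p.1 p.2; positivity) fun p _ => ?_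
    have hab : |h p.1 ^ 2 - h p.2 ^ 2| ^ 2 = (h p.1 - h p.2) ^ 2 * (h p.1 + h p.2) ^ 2 := by
      rw [sq_abs]; ring
    calc (W p.1 p.2 * |h p.1 ^ 2 - h p.2 ^ 2|) ^ 2
        = W p.1 p.2 * (h p.1 - h p.2) ^ 2 * (W p.1 p.2 * (h p.1 + h p.2) ^ 2) := by
          rw [mul_pow, hab]; ring
      _ ≤ W p.1 p.2 * (h p.1 - h p.2) ^ 2 * (2 * (W p.1 p.2 * (h p.1 ^ 2 + h p.2 ^ 2))) := by
          refine mul_le_mul_of_nonneg_left ?_ (mul_nonneg (hW _ _) (sq_nonneg _))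
          nlinarith [hW p.1 p.2, mul_nonneg (hW p.1 p.2) (sq_nonneg (h p.1 - h p.2))]
  simp only [← mul_sum] at hCS
  rw [← two_mul_posVariation hWs] at hCS
  nlinarith [mul_le_mul_of_nonneg_left (sum_sum_mul_sq_add_sq_le hWs hdeg h)
    (dirichletEnergy_nonneg hW h)]

theorem exists_cutWeight_le_sqrt_mul [DecidableEq ι] (hWs : W.IsSymm) (hW : ∀ i j, 0 ≤ W i j)
    (hdeg : ∀ i, ∑ j, W i j ≤ μ i) {h : ι → ℝ} (hh : h ≠ 0) :
    ∃ S : Finset ι, S.Nonempty ∧ (∀ i ∈ S, h i ≠ 0) ∧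
      cutWeight W S ≤ √(dirichletEnergy W h / weightedSqNorm μ h) * ∑ i ∈ S, μ i := by
  set E := dirichletEnergy W h
  set D := weightedSqNorm μ h
  have hE : 0 ≤ E := dirichletEnergy_nonneg hW h
  have hD : 0 ≤ D :=
    weightedSqNorm_nonneg (fun i => (sum_nonneg fun j _ => hW i j).trans (hdeg i)) h
  by_contra! hcut
  have hlt := mul_sum_lt_posVariation (x := fun i => h i ^ 2) (fun i => sq_nonneg (h i))
    (fun h0 => hh (funext fun i => pow_eq_zero_iff two_ne_zero |>.1 (congrFun h0 i)))
    fun S hS hSh => hcut S hS fun i hi => by simpa using hSh i hi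
  have hle : posVariation W (fun i => h i ^ 2) ≤ √(E / D) * D :=
    calc posVariation W (fun i => h i ^ 2) ≤ √(E * D) :=
          (le_abs_self _).trans (Real.abs_le_sqrt (posVariation_sq_le hWs hW hdeg h))
      _ = √(E / D * D ^ 2) := by
          rcases hD.eq_or_lt with h0 | h0
          · simp [← h0]
          · field_simp
      _ = √(E / D) * D := by rw [Real.sqrt_mul (div_nonneg hE hD), Real.sqrt_sq hD]
  exact hlt.not_ge hle

theorem exists_conductance_le_sqrt [DecidableEq ι] (hWs : W.IsSymm) (hW : ∀ i j, 0 ≤ W i j)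
    (hμ : ∀ i, 0 < μ i) (hdeg : ∀ i, ∑ j, W i j ≤ μ i) {f : ι → ℝ}
    (hf : ∑ i, μ i * f i = 0) (hf0 : f ≠ 0) :
    ∃ S : Finset ι, S.Nonempty ∧ S ≠ univ ∧
      cutWeight W S / min (∑ i ∈ S, μ i) (∑ i ∈ Sᶜ, μ i) ≤
        √(dirichletEnergy W f / weightedSqNorm μ f) := by
  obtain ⟨h, hh, hhalf, hratio⟩ := exists_half_support_div_le hW hμ hf hf0
  obtain ⟨S, hS, hSh, hcut⟩ := exists_cutWeight_le_sqrt_mul hWs hW hdeg hh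
  have hSpos : 0 < ∑ i ∈ S, μ i := sum_pos (fun i _ => hμ i) hS
  have hSle : ∑ i ∈ S, μ i ≤ ∑ i ∈ Sᶜ, μ i := by
    have hsub : ∑ i ∈ S, μ i ≤ ∑ i ∈ univ.filter (h · ≠ 0), μ i :=
      sum_le_sum_of_subset_of_nonneg (fun i hi => mem_filter.2 ⟨mem_univ i, hSh i hi⟩)
        fun i _ _ => (hμ i).le
    linarith [sum_add_sum_compl S μ]
  refine ⟨S, hS, fun hSu => ?_, ?_⟩
  · simp only [hSu, compl_univ, sum_empty] at hSle hSpos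
    linarith
  rw [min_eq_left hSle, div_le_iff₀ hSpos]
  exact hcut.trans (by gcongr)

end GeneralizedCheeger

open GeneralizedCheeger

theorem generalized_cheeger_hard_general
    {n : ℕ} (W : Matrix (Fin n) (Fin n) ℝ) (hWsymm : W.IsSymm)
    (hWnn : ∀ i j, 0 ≤ W i j) (d τ : Fin n → ℝ)
    (hd : ∀ i, d i = ∑ j, W i j) (hdpos : ∀ i, 0 < d i) (hτ : ∀ i, 1 ≤ τ i)
    (L : Matrix (Fin n) (Fin n) ℝ)
    (hL : L = Matrix.diagonal (fun i => (Real.sqrt (d i * τ i))⁻¹) *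
        (Matrix.diagonal d - W) *
        Matrix.diagonal (fun i => (Real.sqrt (d i * τ i))⁻¹))
    (lam2 : ℝ)
    (hlam2 : IsGLB {r : ℝ | ∃ u : Fin n → ℝ, u ≠ 0 ∧
        (u ⬝ᵥ fun i => Real.sqrt (d i * τ i)) = 0 ∧
        r = (u ⬝ᵥ (L *ᵥ u)) / (u ⬝ᵥ u)} lam2)
    (φ : ℝ)
    (hφ : IsGLB {r : ℝ | ∃ S : Finset (Fin n), S.Nonempty ∧ S ≠ Finset.univ ∧
        r = (∑ i ∈ S, ∑ j ∈ Sᶜ, W i j) /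
          min (∑ i ∈ S, d i * τ i) (∑ i ∈ Sᶜ, d i * τ i)} φ) :
    φ ^ 2 / 2 ≤ lam2 := by
  set μ := fun i => d i * τ i
  have hμ : ∀ i, 0 < μ i := fun i => mul_pos (hdpos i) (one_pos.trans_le (hτ i))
  have hdeg : ∀ i, ∑ j, W i j ≤ μ i := fun i => hd i ▸ le_mul_of_one_le_right (hdpos i).le (hτ i)
  have hφ0 : 0 ≤ φ := hφ.2 fun r ⟨S, _, _, hr⟩ => hr ▸ div_nonneg (cutWeight_nonneg hWnn S)
    (le_min (sum_nonneg fun i _ => (hμ i).le) (sum_nonneg fun i _ => (hμ i).le))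
  refine hlam2.2 ?_
  rintro r ⟨u, hu0, hu, rfl⟩
  set f := fun i => (√(μ i))⁻¹ * u i
  have hf0 : f ≠ 0 := fun h0 => hu0 <| dotProduct_self_eq_zero.1 <| by
    rw [← weightedSqNorm_inv_sqrt_mul hμ, show (fun i => (√(μ i))⁻¹ * u i) = 0 from h0]
    simp [weightedSqNorm]
  obtain ⟨S, hS, hSu, hSφ⟩ := exists_conductance_le_sqrt hWsymm hWnn hμ hdeg
    ((sum_mul_inv_sqrt_mul hμ u).trans hu) hf0
  have hφ_sq := (Real.le_sqrt hφ0 (div_nonneg (dirichletEnergy_nonneg hWnn f)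
    (weightedSqNorm_nonneg (fun i => (hμ i).le) f))).1 ((hφ.1 ⟨S, hS, hSu, rfl⟩).trans hSφ)
  rw [hL, show diagonal d - W = laplacian W from congrArg (diagonal · - W) (funext hd),
    dotProduct_diagonal_mul_laplacian_mul_diagonal_mulVec hWsymm,
    ← weightedSqNorm_inv_sqrt_mul hμ, div_right_comm]
  linarith

/-- generalized Cheeger inequality, hard direction: `φ_L(G)² / 2 ≤ λ₂`,
where `λ₂` is the second smallest eigenvalue of `L` (characterized via the Rayleigh
quotient over vectors orthogonal to the kernel eigenvector `v₁ i = sqrt(d_i τ_i)`),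
and `φ_L(G)` is the minimal generalized conductance over nonempty proper subsets. -/
theorem generalized_cheeger_hard
    {n : ℕ} (hn : 1 < n) (W : Matrix (Fin n) (Fin n) ℝ) (hWsymm : W.IsSymm)
    (hWnn : ∀ i j, 0 ≤ W i j) (d τ : Fin n → ℝ)
    (hd : ∀ i, d i = ∑ j, W i j) (hdpos : ∀ i, 0 < d i) (hτ : ∀ i, 1 ≤ τ i)
    (L : Matrix (Fin n) (Fin n) ℝ)
    (hL : L = Matrix.diagonal (fun i => (Real.sqrt (d i * τ i))⁻¹) *
        (Matrix.diagonal d - W) *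
        Matrix.diagonal (fun i => (Real.sqrt (d i * τ i))⁻¹))
    (lam2 : ℝ)
    (hlam2 : IsGLB {r : ℝ | ∃ u : Fin n → ℝ, u ≠ 0 ∧
        (u ⬝ᵥ fun i => Real.sqrt (d i * τ i)) = 0 ∧
        r = (u ⬝ᵥ (L *ᵥ u)) / (u ⬝ᵥ u)} lam2)
    (φ : ℝ)
    (hφ : IsGLB {r : ℝ | ∃ S : Finset (Fin n), S.Nonempty ∧ S ≠ Finset.univ ∧
        r = (∑ i ∈ S, ∑ j ∈ Sᶜ, W i j) /
          min (∑ i ∈ S, d i * τ i) (∑ i ∈ Sᶜ, d i * τ i)} φ) :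
    φ ^ 2 / 2 ≤ lam2 :=
  generalized_cheeger_hard_general W hWsymm hWnn d τ hd hdpos hτ L hL lam2 hlam2 φ hφ
end

section
/- Extended Cheeger inequality with respect to the Rayleigh quotient: let L = (T D_W)^{-1/2}(D_W - W)(D_W T)^{-1/2} with τ_i ≥ 1. For any nonzero vector u orthogonal to the vector (sqrt(d_i τ_i))_i, order vertices v₁,...,vₙ so that g[v₁] ≥ ... ≥ g[vₙ] where g = (D_W T)^{-1/2} u, and let S_i = {v₁,...,v_i}. Then (min_i h_L(S_i))² / 2 ≤ (u^T L u)/(u^T u). -/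
/-!
Write `u = (D_W T)^{1/2} g`, so that `uᵀ L u = ½ ∑ᵢⱼ W_ij (g_i - g_j)²`, `uᵀ u = ∑ᵢ μ_i g_i²` and
`∑ᵢ μ_i g_i = 0`, where `μ_i = d_i τ_i`. Shifting `g` by a `μ`-weighted median `c` only increases
`∑ᵢ μ_i g_i²`, and splits `g - c` into its positive and negative parts, each supported on at most
half of the total volume. Every nonempty superlevel set of either part `r` is a sweep set or the
complement of one, so its cut is at least `h` times its volume, `h` being the least sweep ratio.
Integrating over the levels of `r²` (co-area) gives `h ∑ μ_i r_i² ≤ ∑ W_ij (r_i² - r_j²)₊`, and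
Cauchy–Schwarz with `∑_j W_ij = d_i ≤ μ_i` turns this into `h² ∑ μ_i r_i² ≤ ∑ W_ij (r_i - r_j)²`.
-/

open Matrix Finset MeasureTheory

noncomputable section CheegerRatio

variable {ι : Type*} [Fintype ι] [DecidableEq ι]

def cutWeight (W : Matrix ι ι ℝ) (S : Finset ι) : ℝ := ∑ i ∈ S, ∑ j ∈ Sᶜ, W i j

def cheegerRatio (W : Matrix ι ι ℝ) (μ : ι → ℝ) (S : Finset ι) : ℝ :=
  cutWeight W S / min (∑ i ∈ S, μ i) (∑ i ∈ Sᶜ, μ i)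

variable {W : Matrix ι ι ℝ} {μ : ι → ℝ}

lemma cutWeight_nonneg (hW : ∀ i j, 0 ≤ W i j) (S : Finset ι) : 0 ≤ cutWeight W S :=
  sum_nonneg fun i _ => sum_nonneg fun j _ => hW i j

lemma cutWeight_compl (hW : W.IsSymm) (S : Finset ι) : cutWeight W Sᶜ = cutWeight W S := by
  rw [cutWeight, compl_compl]
  exact sum_comm.trans (sum_congr rfl fun i _ => sum_congr rfl fun j _ => hW.apply i j)

lemma cheegerRatio_nonneg (hW : ∀ i j, 0 ≤ W i j) (hμ : ∀ i, 0 ≤ μ i) (S : Finset ι) :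
    0 ≤ cheegerRatio W μ S :=
  div_nonneg (cutWeight_nonneg hW S)
    (le_min (sum_nonneg fun i _ => hμ i) (sum_nonneg fun i _ => hμ i))

lemma cheegerRatio_compl (hW : W.IsSymm) (S : Finset ι) :
    cheegerRatio W μ Sᶜ = cheegerRatio W μ S := by
  rw [cheegerRatio, cheegerRatio, cutWeight_compl hW, compl_compl, min_comm]

lemma mul_sum_le_cutWeight {S : Finset ι} {h : ℝ} (hh : h ≤ cheegerRatio W μ S)
    (hpos : 0 < ∑ i ∈ S, μ i) (hhalf : 2 * ∑ i ∈ S, μ i ≤ ∑ i, μ i) :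
    h * ∑ i ∈ S, μ i ≤ cutWeight W S := by
  have hmin : min (∑ i ∈ S, μ i) (∑ i ∈ Sᶜ, μ i) = ∑ i ∈ S, μ i := by
    have := sum_add_sum_compl S μ
    exact min_eq_left (by linarith)
  rwa [cheegerRatio, hmin, le_div_iff₀ hpos] at hh

end CheegerRatio

section SymmetricSums

variable {ι : Type*} [Fintype ι] {W : Matrix ι ι ℝ}

lemma sum_sum_mul_swap (hW : W.IsSymm) (F : ι → ι → ℝ) :
    ∑ i, ∑ j, W i j * F j i = ∑ i, ∑ j, W i j * F i j := by
  rw [sum_comm]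
  exact sum_congr rfl fun i _ => sum_congr rfl fun j _ => by rw [hW.apply]

lemma two_mul_sum_sum_mul_max_sub (hW : W.IsSymm) (w : ι → ℝ) :
    2 * ∑ i, ∑ j, W i j * max (w i - w j) 0 = ∑ i, ∑ j, W i j * |w i - w j| := by
  have hswap := sum_sum_mul_swap hW fun i j => max (w i - w j) 0
  have habs : ∀ i j, |w i - w j| = max (w i - w j) 0 + max (w j - w i) 0 := fun i j => by
    rcases le_total (w i) (w j) with h | h
    · rw [abs_of_nonpos (by linarith), max_eq_right (by linarith), max_eq_left (by linarith)]
      ring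
    · rw [abs_of_nonneg (by linarith), max_eq_left (by linarith), max_eq_right (by linarith)]
      ring
  simp only [habs, mul_add, sum_add_distrib, hswap]
  ring

lemma dotProduct_diagonal_sum_sub_mulVec [DecidableEq ι] (hW : W.IsSymm) (g : ι → ℝ) :
    g ⬝ᵥ ((diagonal (fun i => ∑ j, W i j) - W) *ᵥ g) =
      (∑ i, ∑ j, W i j * (g i - g j) ^ 2) / 2 := by
  have hswap := sum_sum_mul_swap hW fun i _ => g i ^ 2
  have hexpand : ∀ i j, W i j * (g i - g j) ^ 2 =
      W i j * g i ^ 2 + W i j * g j ^ 2 - 2 * (g i * (W i j * g j)) := fun i j => by ring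
  have hform : g ⬝ᵥ ((diagonal (fun i => ∑ j, W i j) - W) *ᵥ g) =
      ∑ i, ∑ j, W i j * g i ^ 2 - ∑ i, ∑ j, g i * (W i j * g j) := by
    rw [sub_mulVec, dotProduct_sub]
    congr 1
    · simp only [dotProduct, mulVec_diagonal]
      exact sum_congr rfl fun i _ => by
        rw [sum_mul, mul_sum]; exact sum_congr rfl fun j _ => by ring
    · simp only [dotProduct, mulVec, mul_sum]
  simp only [hform, hexpand, sum_add_distrib, sum_sub_distrib, hswap, ← mul_sum]
  ring

end SymmetricSums

lemma dotProduct_diagonal_mul_mul_diagonal_mulVec {ι : Type*} [Fintype ι] [DecidableEq ι]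
    (s u : ι → ℝ) (A : Matrix ι ι ℝ) :
    u ⬝ᵥ ((diagonal s * A * diagonal s) *ᵥ u) = (s * u) ⬝ᵥ (A *ᵥ (s * u)) := by
  have hright : diagonal s *ᵥ u = s * u := funext fun i => mulVec_diagonal s u i
  have hleft : u ᵥ* diagonal s = s * u :=
    funext fun i => (vecMul_diagonal u s i).trans (mul_comm _ _)
  rw [← mulVec_mulVec, ← mulVec_mulVec, dotProduct_mulVec, hright, hleft]

section LayerCake

lemma integrable_indicator_Ico_const (a b c : ℝ) :
    Integrable ((Set.Ico a b).indicator fun _ => c) :=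
  (integrable_indicator_iff measurableSet_Ico).2 (integrableOn_const (by simp))

lemma integral_sum_indicator_Ico {κ : Type*} (s : Finset κ) (a b c : κ → ℝ) :
    ∫ t, ∑ k ∈ s, (Set.Ico (a k) (b k)).indicator (fun _ => c k) t =
      ∑ k ∈ s, c k * max (b k - a k) 0 := by
  rw [integral_finsetSum _ fun k _ => integrable_indicator_Ico_const _ _ _]
  simp [integral_indicator_const _ measurableSet_Ico, Real.volume_real_Ico, mul_comm]

variable {ι : Type*} [Fintype ι] [DecidableEq ι]

/-- Co-area: both sides are integrals over the level `t`, of `h` times the weight and of the cut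
of the superlevel set `{i | t < w i}` respectively. -/
lemma mul_sum_mul_le_sum_sum_mul_max_sub {W : Matrix ι ι ℝ} {c w : ι → ℝ} {h : ℝ}
    (hW : ∀ i j, 0 ≤ W i j) (hw : ∀ i, 0 ≤ w i)
    (hlevel : ∀ t, 0 ≤ t → h * ∑ i with t < w i, c i ≤ cutWeight W {i | t < w i}) :
    h * ∑ i, c i * w i ≤ ∑ i, ∑ j, W i j * max (w i - w j) 0 := by
  set F : ℝ → ℝ := fun t => ∑ i, (Set.Ico 0 (w i)).indicator (fun _ => c i) t
  set G : ℝ → ℝ := fun t =>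
    ∑ p : ι × ι, (Set.Ico (w p.2) (w p.1)).indicator (fun _ => W p.1 p.2) t
  have hF : ∑ i, c i * w i = ∫ t, F t := by
    simp only [F, integral_sum_indicator_Ico, sub_zero, max_eq_left (hw _)]
  have hG : ∑ i, ∑ j, W i j * max (w i - w j) 0 = ∫ t, G t := by
    rw [integral_sum_indicator_Ico]
    exact (Fintype.sum_prod_type' fun i j => W i j * max (w i - w j) 0).symm
  have hpoint : ∀ t, h * F t ≤ G t := by
    intro t
    rcases lt_or_ge t 0 with ht | ht
    · have hF0 : F t = 0 := sum_eq_zero fun i _ =>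
        Set.indicator_of_notMem (fun hi => (ht.trans_le hi.1).false) _
      rw [hF0, mul_zero]
      exact sum_nonneg fun p _ => Set.indicator_nonneg (fun _ _ => hW _ _) _
    · convert hlevel t ht using 2
      · simp [F, Set.indicator_apply, ht, sum_filter]
      · simp only [G, Fintype.sum_prod_type' fun i j =>
          (Set.Ico (w j) (w i)).indicator (fun _ => W i j) t]
        simp only [cutWeight, Set.indicator_apply, Set.mem_Ico, sum_filter, compl_filter, not_lt]
        refine sum_congr rfl fun i _ => ?_
        by_cases hi : t < w i <;> simp [hi]
  rw [hF, hG, ← integral_const_mul]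
  exact integral_mono
    ((integrable_finsetSum _ fun i _ => integrable_indicator_Ico_const _ _ _).const_mul h)
    (integrable_finsetSum _ fun p _ => integrable_indicator_Ico_const _ _ _) hpoint

end LayerCake

section CauchySchwarz

variable {ι : Type*} [Fintype ι] {W : Matrix ι ι ℝ} {μ : ι → ℝ}

lemma sum_sum_mul_add_sq_le (hW : W.IsSymm) (hWnn : ∀ i j, 0 ≤ W i j)
    (hdeg : ∀ i, ∑ j, W i j ≤ μ i) (r : ι → ℝ) :
    ∑ i, ∑ j, W i j * (r i + r j) ^ 2 ≤ 4 * ∑ i, μ i * r i ^ 2 := by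
  have hswap := sum_sum_mul_swap hW fun i _ => r i ^ 2
  calc ∑ i, ∑ j, W i j * (r i + r j) ^ 2
      ≤ ∑ i, ∑ j, (2 * (W i j * r i ^ 2) + 2 * (W i j * r j ^ 2)) :=
        sum_le_sum fun i _ => sum_le_sum fun j _ => by
          nlinarith [mul_nonneg (hWnn i j) (sq_nonneg (r i - r j))]
    _ = 4 * ∑ i, (∑ j, W i j) * r i ^ 2 := by
        simp only [sum_add_distrib, ← mul_sum, hswap, sum_mul]
        ring
    _ ≤ 4 * ∑ i, μ i * r i ^ 2 := by
        gcongr with i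
        exact hdeg i

lemma sq_sum_sum_mul_max_sq_sub_le (hW : W.IsSymm) (hWnn : ∀ i j, 0 ≤ W i j)
    (hdeg : ∀ i, ∑ j, W i j ≤ μ i) (r : ι → ℝ) :
    (∑ i, ∑ j, W i j * max (r i ^ 2 - r j ^ 2) 0) ^ 2 ≤
      (∑ i, μ i * r i ^ 2) * ∑ i, ∑ j, W i j * (r i - r j) ^ 2 := by
  have hCS : (∑ i, ∑ j, W i j * |r i ^ 2 - r j ^ 2|) ^ 2 ≤
      (∑ i, ∑ j, W i j * (r i - r j) ^ 2) * ∑ i, ∑ j, W i j * (r i + r j) ^ 2 := by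
    simp only [← Fintype.sum_prod_type']
    refine sum_sq_le_sum_mul_sum_of_sq_le_mul _
      (fun p _ => mul_nonneg (hWnn _ _) (sq_nonneg _))
      (fun p _ => mul_nonneg (hWnn _ _) (sq_nonneg _)) fun p _ => le_of_eq ?_
    rw [mul_pow, sq_abs]
    ring
  have hsum := sum_sum_mul_add_sq_le hW hWnn hdeg r
  have hN : 0 ≤ ∑ i, ∑ j, W i j * (r i - r j) ^ 2 :=
    sum_nonneg fun i _ => sum_nonneg fun j _ => mul_nonneg (hWnn i j) (sq_nonneg _)
  rw [← two_mul_sum_sum_mul_max_sub hW] at hCS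
  nlinarith [mul_le_mul_of_nonneg_left hsum hN]

lemma sq_mul_sum_mul_sq_le [DecidableEq ι] (hW : W.IsSymm) (hWnn : ∀ i j, 0 ≤ W i j)
    (hdeg : ∀ i, ∑ j, W i j ≤ μ i) {r : ι → ℝ} {h : ℝ} (hh : 0 ≤ h)
    (hlevel : ∀ t, 0 ≤ t →
      h * ∑ i with t < r i ^ 2, μ i ≤ cutWeight W {i | t < r i ^ 2}) :
    h ^ 2 * ∑ i, μ i * r i ^ 2 ≤ ∑ i, ∑ j, W i j * (r i - r j) ^ 2 := by
  have hco := mul_sum_mul_le_sum_sum_mul_max_sub hWnn (fun i => sq_nonneg (r i)) hlevel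
  have hCS := sq_sum_sum_mul_max_sq_sub_le hW hWnn hdeg r
  have hD : 0 ≤ ∑ i, μ i * r i ^ 2 := sum_nonneg fun i _ =>
    mul_nonneg ((sum_nonneg fun j _ => hWnn i j).trans (hdeg i)) (sq_nonneg _)
  have hN : 0 ≤ ∑ i, ∑ j, W i j * (r i - r j) ^ 2 :=
    sum_nonneg fun i _ => sum_nonneg fun j _ => mul_nonneg (hWnn i j) (sq_nonneg _)
  rcases hD.eq_or_lt with hD0 | hDpos
  · rw [← hD0, mul_zero]; exact hN
  · have hsq := pow_le_pow_left₀ (mul_nonneg hh hD) hco 2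
    nlinarith

end CauchySchwarz

section Median

variable {ι : Type*} [Fintype ι]

lemma exists_weighted_median {μ : ι → ℝ} (hμ : ∀ i, 0 ≤ μ i) (g : ι → ℝ) :
    ∃ c, 2 * ∑ i with c < g i, μ i ≤ ∑ i, μ i ∧ 2 * ∑ i with g i < c, μ i ≤ ∑ i, μ i := by
  rcases isEmpty_or_nonempty ι with hι | hι
  · exact ⟨0, by simp⟩
  have htotal : 0 ≤ ∑ i, μ i := sum_nonneg fun i _ => hμ i
  set C := (univ.image g).filter fun x => ∑ i, μ i ≤ 2 * ∑ i with x ≤ g i, μ i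
  have hCne : C.Nonempty := by
    obtain ⟨i₀, -, hi₀⟩ := exists_min_image univ g univ_nonempty
    refine ⟨g i₀, mem_filter.2 ⟨mem_image_of_mem g (mem_univ _), ?_⟩⟩
    rw [filter_true_of_mem fun i _ => hi₀ i (mem_univ i)]
    linarith
  set c := C.max' hCne
  have hcC : ∑ i, μ i ≤ 2 * ∑ i with c ≤ g i, μ i := (mem_filter.1 (C.max'_mem hCne)).2
  refine ⟨c, ?_, ?_⟩
  · rcases (univ.filter fun i => c < g i).eq_empty_or_nonempty with hE | hE
    · rw [hE, sum_empty]
      linarith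
    -- the next value of `g` above `c` is not a median candidate, by maximality of `c`
    obtain ⟨j, hj, hjmin⟩ := exists_min_image _ g hE
    have hcj : c < g j := (mem_filter.1 hj).2
    have hset : (univ.filter fun i => g j ≤ g i) = univ.filter fun i => c < g i := by
      ext i
      simp only [mem_filter, mem_univ, true_and]
      exact ⟨hcj.trans_le, fun hi => hjmin i (mem_filter.2 ⟨mem_univ i, hi⟩)⟩
    have hjC : g j ∉ C := fun hmem => (C.le_max' _ hmem).not_gt hcj
    simp only [C, mem_filter, mem_image_of_mem g (mem_univ j), true_and, not_le, hset] at hjC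
    linarith
  · have hsplit := sum_filter_add_sum_filter_not univ (fun i => c ≤ g i) μ
    simp only [not_le] at hsplit
    linarith

end Median

section PositiveNegativeParts

lemma sq_sub_eq_sq_max_add_sq_max (a c : ℝ) :
    (a - c) ^ 2 = max (a - c) 0 ^ 2 + max (c - a) 0 ^ 2 := by
  rcases le_total a c with h | h
  · rw [max_eq_right (by linarith), max_eq_left (by linarith)]; ring
  · rw [max_eq_left (by linarith), max_eq_right (by linarith)]; ring

lemma sq_max_sub_add_sq_max_sub_le (a b c : ℝ) :
    (max (a - c) 0 - max (b - c) 0) ^ 2 + (max (c - a) 0 - max (c - b) 0) ^ 2 ≤ (a - b) ^ 2 := by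
  rcases le_total a c with ha | ha <;> rcases le_total b c with hb | hb
  · rw [max_eq_right (by linarith), max_eq_right (by linarith), max_eq_left (by linarith),
      max_eq_left (by linarith)]; nlinarith
  · rw [max_eq_right (by linarith), max_eq_left (by linarith), max_eq_left (by linarith),
      max_eq_right (by linarith)]; nlinarith
  · rw [max_eq_left (by linarith), max_eq_right (by linarith), max_eq_right (by linarith),
      max_eq_left (by linarith)]; nlinarith
  · rw [max_eq_left (by linarith), max_eq_left (by linarith), max_eq_right (by linarith),
      max_eq_right (by linarith)]; nlinarith

lemma lt_sq_max_zero_iff {t x : ℝ} (ht : 0 ≤ t) : t < max x 0 ^ 2 ↔ √t < x := by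
  rw [← Real.sqrt_lt_sqrt_iff ht, Real.sqrt_sq (le_max_right x 0), lt_max_iff,
    or_iff_left (Real.sqrt_nonneg t).not_gt]

lemma sum_mul_sq_le_sum_mul_sub_sq {ι : Type*} [Fintype ι] {μ g : ι → ℝ} (hμ : ∀ i, 0 ≤ μ i)
    (hg : ∑ i, μ i * g i = 0) (c : ℝ) :
    ∑ i, μ i * g i ^ 2 ≤ ∑ i, μ i * (g i - c) ^ 2 := by
  have hexpand : ∀ i, μ i * (g i - c) ^ 2 = μ i * g i ^ 2 - 2 * c * (μ i * g i) + c ^ 2 * μ i :=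
    fun i => by ring
  simp only [hexpand, sum_add_distrib, sum_sub_distrib, ← mul_sum, hg]
  nlinarith [sum_nonneg fun i (_ : i ∈ univ) => hμ i, sq_nonneg c]

end PositiveNegativeParts

section Sweep

variable {ι : Type*} [DecidableEq ι] [LinearOrder ι] [LocallyFiniteOrderBot ι]
  {σ : Equiv.Perm ι} {g : ι → ℝ}

lemma exists_eq_image_Iic (hσ : Antitone (g ∘ σ)) {S : Finset ι} (hS : S.Nonempty)
    (hup : ∀ i j, g i ≤ g j → i ∈ S → j ∈ S) : ∃ k, S = (Iic k).image σ := by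
  refine ⟨(S.image σ.symm).max' (hS.image _), ext fun i => ⟨fun hi => ?_, fun hi => ?_⟩⟩
  · exact mem_image.2 ⟨σ.symm i, mem_Iic.2 (le_max' _ _ (mem_image_of_mem _ hi)),
      σ.apply_symm_apply i⟩
  · obtain ⟨j, hj, rfl⟩ := mem_image.1 hi
    obtain ⟨i', hi', hk⟩ := mem_image.1 ((S.image σ.symm).max'_mem (hS.image _))
    refine hup i' _ ?_ hi'
    simpa [← hk] using hσ (mem_Iic.1 hj)

variable [Fintype ι]

noncomputable def minSweepRatio (W : Matrix ι ι ℝ) (μ : ι → ℝ) (σ : Equiv.Perm ι) : ℝ :=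
  sInf {r | ∃ k, (Iic k).image σ ≠ univ ∧ r = cheegerRatio W μ ((Iic k).image σ)}

variable {W : Matrix ι ι ℝ} {μ : ι → ℝ}

lemma minSweepRatio_nonneg (hW : ∀ i j, 0 ≤ W i j) (hμ : ∀ i, 0 ≤ μ i) :
    0 ≤ minSweepRatio W μ σ :=
  Real.sInf_nonneg (by rintro _ ⟨k, -, rfl⟩; exact cheegerRatio_nonneg hW hμ _)

lemma minSweepRatio_le_cheegerRatio (hW : ∀ i j, 0 ≤ W i j) (hμ : ∀ i, 0 ≤ μ i)
    (hσ : Antitone (g ∘ σ)) {S : Finset ι} (hS : S.Nonempty) (hSu : S ≠ univ)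
    (hup : ∀ i j, g i ≤ g j → i ∈ S → j ∈ S) :
    minSweepRatio W μ σ ≤ cheegerRatio W μ S := by
  obtain ⟨k, rfl⟩ := exists_eq_image_Iic hσ hS hup
  exact csInf_le ⟨0, by rintro _ ⟨k, -, rfl⟩; exact cheegerRatio_nonneg hW hμ _⟩ ⟨k, hSu, rfl⟩

lemma minSweepRatio_mul_sum_le_cutWeight (hWs : W.IsSymm) (hW : ∀ i j, 0 ≤ W i j)
    (hμ : ∀ i, 0 < μ i) (hσ : Antitone (g ∘ σ)) {S : Finset ι}
    (hhalf : 2 * ∑ i ∈ S, μ i ≤ ∑ i, μ i)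
    (hup : (∀ i j, g i ≤ g j → i ∈ S → j ∈ S) ∨ ∀ i j, g i ≤ g j → i ∈ Sᶜ → j ∈ Sᶜ) :
    minSweepRatio W μ σ * ∑ i ∈ S, μ i ≤ cutWeight W S := by
  rcases S.eq_empty_or_nonempty with rfl | hS
  · simp [cutWeight]
  have hpos : 0 < ∑ i ∈ S, μ i := sum_pos (fun i _ => hμ i) hS
  have hSu : S ≠ univ := by rintro rfl; linarith
  have hμ' : ∀ i, 0 ≤ μ i := fun i => (hμ i).le
  refine mul_sum_le_cutWeight ?_ hpos hhalf
  rcases hup with hup | hup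
  · exact minSweepRatio_le_cheegerRatio hW hμ' hσ hS hSu hup
  · rw [← cheegerRatio_compl hWs]
    exact minSweepRatio_le_cheegerRatio hW hμ' hσ
      (nonempty_iff_ne_empty.2 ((compl_eq_empty_iff S).not.2 hSu))
      ((compl_ne_univ_iff_nonempty S).2 hS) hup

theorem sq_minSweepRatio_mul_sum_le (hWs : W.IsSymm) (hW : ∀ i j, 0 ≤ W i j)
    (hμ : ∀ i, 0 < μ i) (hdeg : ∀ i, ∑ j, W i j ≤ μ i) (hσ : Antitone (g ∘ σ))
    (hg : ∑ i, μ i * g i = 0) :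
    minSweepRatio W μ σ ^ 2 * ∑ i, μ i * g i ^ 2 ≤ ∑ i, ∑ j, W i j * (g i - g j) ^ 2 := by
  have hμ' : ∀ i, 0 ≤ μ i := fun i => (hμ i).le
  obtain ⟨c, hc_above, hc_below⟩ := exists_weighted_median hμ' g
  have hh := minSweepRatio_nonneg (σ := σ) hW hμ'
  have hhalf : ∀ {S T : Finset ι}, S ⊆ T → 2 * ∑ i ∈ T, μ i ≤ ∑ i, μ i →
      2 * ∑ i ∈ S, μ i ≤ ∑ i, μ i := fun hST hT => by
    linarith [sum_le_sum_of_subset_of_nonneg hST fun i _ _ => hμ' i]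
  have hpos := sq_mul_sum_mul_sq_le (r := fun i => max (g i - c) 0) hWs hW hdeg hh
    fun t ht => by
      refine minSweepRatio_mul_sum_le_cutWeight hWs hW hμ hσ (hhalf (fun i => ?_) hc_above)
        (Or.inl fun i j hij => ?_)
      all_goals simp only [mem_filter, mem_univ, true_and, lt_sq_max_zero_iff ht]
      · intro hi; linarith [Real.sqrt_nonneg t]
      · intro hi; linarith
  have hneg := sq_mul_sum_mul_sq_le (r := fun i => max (c - g i) 0) hWs hW hdeg hh
    fun t ht => by
      refine minSweepRatio_mul_sum_le_cutWeight hWs hW hμ hσ (hhalf (fun i => ?_) hc_below)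
        (Or.inr fun i j hij => ?_)
      all_goals simp only [mem_compl, mem_filter, mem_univ, true_and, lt_sq_max_zero_iff ht]
      · intro hi; linarith [Real.sqrt_nonneg t]
      · intro hi hj; exact hi (by linarith)
  calc minSweepRatio W μ σ ^ 2 * ∑ i, μ i * g i ^ 2
      ≤ minSweepRatio W μ σ ^ 2 * ∑ i, μ i * (g i - c) ^ 2 :=
        mul_le_mul_of_nonneg_left (sum_mul_sq_le_sum_mul_sub_sq hμ' hg c) (sq_nonneg _)
    _ = minSweepRatio W μ σ ^ 2 * ∑ i, μ i * max (g i - c) 0 ^ 2 +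
          minSweepRatio W μ σ ^ 2 * ∑ i, μ i * max (c - g i) 0 ^ 2 := by
        simp only [sq_sub_eq_sq_max_add_sq_max, mul_add, sum_add_distrib]
    _ ≤ ∑ i, ∑ j, W i j * (max (g i - c) 0 - max (g j - c) 0) ^ 2 +
          ∑ i, ∑ j, W i j * (max (c - g i) 0 - max (c - g j) 0) ^ 2 := add_le_add hpos hneg
    _ ≤ ∑ i, ∑ j, W i j * (g i - g j) ^ 2 := by
        simp only [← sum_add_distrib, ← mul_add]
        exact sum_le_sum fun i _ => sum_le_sum fun j _ =>
          mul_le_mul_of_nonneg_left (sq_max_sub_add_sq_max_sub_le _ _ c) (hW i j)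

end Sweep

theorem extended_cheeger_rayleigh_general
    {n : ℕ} (W : Matrix (Fin n) (Fin n) ℝ) (hWsymm : W.IsSymm)
    (hWnn : ∀ i j, 0 ≤ W i j) (d τ : Fin n → ℝ)
    (hd : ∀ i, d i = ∑ j, W i j) (hdpos : ∀ i, 0 < d i) (hτ : ∀ i, 1 ≤ τ i)
    (L : Matrix (Fin n) (Fin n) ℝ)
    (hL : L = Matrix.diagonal (fun i => (Real.sqrt (d i * τ i))⁻¹) *
        (Matrix.diagonal d - W) *
        Matrix.diagonal (fun i => (Real.sqrt (d i * τ i))⁻¹))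
    (u : Fin n → ℝ) (hu : u ≠ 0)
    (horth : (u ⬝ᵥ fun i => Real.sqrt (d i * τ i)) = 0)
    (g : Fin n → ℝ) (hg : ∀ i, g i = u i / Real.sqrt (d i * τ i))
    (σ : Equiv.Perm (Fin n))
    (hsweep : ∀ k l : Fin n, k ≤ l → g (σ l) ≤ g (σ k)) :
    (sInf {r : ℝ | ∃ k : Fin n,
        (Finset.image (⇑σ) (Finset.Iic k) : Finset (Fin n)) ≠ Finset.univ ∧
        r = (∑ i ∈ Finset.image (⇑σ) (Finset.Iic k),
              ∑ j ∈ (Finset.image (⇑σ) (Finset.Iic k))ᶜ, W i j) /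
          min (∑ i ∈ Finset.image (⇑σ) (Finset.Iic k), d i * τ i)
              (∑ i ∈ (Finset.image (⇑σ) (Finset.Iic k))ᶜ, d i * τ i)}) ^ 2 / 2
      ≤ (u ⬝ᵥ (L *ᵥ u)) / (u ⬝ᵥ u) := by
  change minSweepRatio W (fun i => d i * τ i) σ ^ 2 / 2 ≤ _
  have hμ : ∀ i, 0 < d i * τ i := fun i => mul_pos (hdpos i) (one_pos.trans_le (hτ i))
  have hsqrt : ∀ i, √(d i * τ i) ≠ 0 := fun i => (Real.sqrt_pos.2 (hμ i)).ne'
  have hdeg : ∀ i, ∑ j, W i j ≤ d i * τ i := fun i => by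
    rw [← hd i]; exact le_mul_of_one_le_right (hdpos i).le (hτ i)
  obtain rfl : u = fun i => √(d i * τ i) * g i :=
    funext fun i => by rw [hg i, mul_div_cancel₀ _ (hsqrt i)]
  have hnorm : ((fun i => √(d i * τ i) * g i) ⬝ᵥ fun i => √(d i * τ i) * g i) =
      ∑ i, d i * τ i * g i ^ 2 :=
    sum_congr rfl fun i _ => by rw [← Real.sq_sqrt (hμ i).le]; ring
  have hnorm_pos : 0 < ∑ i, d i * τ i * g i ^ 2 :=
    hnorm ▸ lt_of_le_of_ne (sum_nonneg fun i _ => mul_self_nonneg _)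
      (Ne.symm (dotProduct_self_eq_zero.not.2 hu))
  have hcentered : ∑ i, d i * τ i * g i = 0 :=
    horth ▸ sum_congr rfl fun i _ => by rw [← Real.mul_self_sqrt (hμ i).le]; ring
  have hrescale : (fun i => (√(d i * τ i))⁻¹) * (fun i => √(d i * τ i) * g i) = g :=
    funext fun i => inv_mul_cancel_left₀ (hsqrt i) (g i)
  rw [hnorm, hL, dotProduct_diagonal_mul_mul_diagonal_mulVec, hrescale,
    congrArg diagonal (funext hd), dotProduct_diagonal_sum_sub_mulVec hWsymm, le_div_iff₀ hnorm_pos]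
  linarith [sq_minSweepRatio_mul_sum_le hWsymm hWnn hμ hdeg (fun _ _ h => hsweep _ _ h) hcentered]

/-- extended Cheeger inequality with respect to the Rayleigh quotient:
for any nonzero `u` orthogonal to `(sqrt(d_i τ_i))_i`, sweeping the vertices in
nonincreasing order of `g = (D_W T)^{-1/2} u` yields sweep sets `S_k` with
`(min_k h_L(S_k))² / 2 ≤ u^T L u / u^T u`. -/
theorem extended_cheeger_rayleigh
    {n : ℕ} (hn : 1 < n) (W : Matrix (Fin n) (Fin n) ℝ) (hWsymm : W.IsSymm)
    (hWnn : ∀ i j, 0 ≤ W i j) (d τ : Fin n → ℝ)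
    (hd : ∀ i, d i = ∑ j, W i j) (hdpos : ∀ i, 0 < d i) (hτ : ∀ i, 1 ≤ τ i)
    (L : Matrix (Fin n) (Fin n) ℝ)
    (hL : L = Matrix.diagonal (fun i => (Real.sqrt (d i * τ i))⁻¹) *
        (Matrix.diagonal d - W) *
        Matrix.diagonal (fun i => (Real.sqrt (d i * τ i))⁻¹))
    (u : Fin n → ℝ) (hu : u ≠ 0)
    (horth : (u ⬝ᵥ fun i => Real.sqrt (d i * τ i)) = 0)
    (g : Fin n → ℝ) (hg : ∀ i, g i = u i / Real.sqrt (d i * τ i))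
    (σ : Equiv.Perm (Fin n))
    (hsweep : ∀ k l : Fin n, k ≤ l → g (σ l) ≤ g (σ k)) :
    (sInf {r : ℝ | ∃ k : Fin n,
        (Finset.image (⇑σ) (Finset.Iic k) : Finset (Fin n)) ≠ Finset.univ ∧
        r = (∑ i ∈ Finset.image (⇑σ) (Finset.Iic k),
              ∑ j ∈ (Finset.image (⇑σ) (Finset.Iic k))ᶜ, W i j) /
          min (∑ i ∈ Finset.image (⇑σ) (Finset.Iic k), d i * τ i)
              (∑ i ∈ (Finset.image (⇑σ) (Finset.Iic k))ᶜ, d i * τ i)}) ^ 2 / 2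
      ≤ (u ⬝ᵥ (L *ᵥ u)) / (u ⬝ᵥ u) :=
  extended_cheeger_rayleigh_general W hWsymm hWnn d τ hd hdpos hτ L hL u hu horth g hg σ hsweep
end

section
/- For the continuous-time random walk θ_μ(t) = e^{-L^RW t} μ with L^RW = (D_W - W)(D_W T)^{-1}, and any subset S with vol_L(S) ≤ vol_L(V)/2, the total probability Θ_μ(t,S) = Σ_{i∈S} θ_μ(t)[i] starting from μ = (D_W T)χ_S / vol_L(S) satisfies dΘ_μ(t,S)/dt ≤ 0 for all t ≥ 0. -/
/-!
Write `L^RW = L * M` with `L = D_W - W` symmetric and positive semidefinite and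
`M = (D_W T)⁻¹` diagonal. Since `M * (L * M) = (M * L) * M`, the exponential intertwines as
`M * e^{s L M} = (e^{s L M})ᵀ * M`, so with `K = e^{-(t/2) L^RW}` one gets
`L^RW * e^{-t L^RW} = K * L * Kᵀ * M`. As `M μ = χ_S / vol_L(S)`, this gives
`dΘ/dt = -(Kᵀ χ_S) ⬝ L (Kᵀ χ_S) / vol_L(S) ≤ 0`.
-/

open Matrix NormedSpace

namespace Matrix

variable {ι : Type*} [Fintype ι] [DecidableEq ι]

section

-- Matrices carry no global norm; any algebra norm makes the Banach-algebra results on `exp` apply.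
attribute [local instance] Matrix.linftyOpNormedRing Matrix.linftyOpNormedAlgebra

theorem exp_mul_eq_mul_exp_of_mul_eq {X L Y : Matrix ι ι ℝ} (h : X * L = L * Y) :
    exp X * L = L * exp Y :=
  (SemiconjBy.exp_right h.symm).symm

theorem hasDerivAt_dotProduct_exp_neg_smul_mulVec (A : Matrix ι ι ℝ) (u v : ι → ℝ) (t : ℝ) :
    HasDerivAt (fun s : ℝ => u ⬝ᵥ (exp ((-s) • A) *ᵥ v))
      (-(u ⬝ᵥ ((A * exp ((-t) • A)) *ᵥ v))) t := by
  let φ : Matrix ι ι ℝ →ₗ[ℝ] ℝ :=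
    { toFun := fun B => u ⬝ᵥ (B *ᵥ v)
      map_add' := fun B C => by simp [add_mulVec, dotProduct_add]
      map_smul' := fun c B => by simp [smul_mulVec, dotProduct_smul] }
  have hφ : φ.toContinuousLinearMap (-(A * exp ((-t) • A)))
      = -(u ⬝ᵥ ((A * exp ((-t) • A)) *ᵥ v)) := by
    simp [φ, neg_mulVec]
  have hexp := (hasDerivAt_exp_smul_const' A (-t)).scomp t (hasDerivAt_neg t)
  rw [neg_one_smul] at hexp
  exact hφ ▸ φ.toContinuousLinearMap.hasFDerivAt.comp_hasDerivAt t hexp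

end

theorem mul_exp_two_smul_eq (L M : Matrix ι ι ℝ) (hL : Lᵀ = L) (hM : Mᵀ = M) (s : ℝ) :
    L * M * exp ((2 * s) • (L * M)) = exp (s • (L * M)) * L * (exp (s • (L * M)))ᵀ * M := by
  set K := exp (s • (L * M))
  have hsq : exp ((2 * s) • (L * M)) = K * K := by
    rw [two_mul, add_smul, exp_add_of_commute _ _ (Commute.refl _)]
  have hcomm : Commute (L * M) K := ((Commute.refl _).smul_right s).exp_right
  have hMK : M * K = Kᵀ * M := by
    rw [← exp_transpose, transpose_smul, transpose_mul, hL, hM]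
    refine (exp_mul_eq_mul_exp_of_mul_eq ?_).symm
    rw [mul_smul_comm, smul_mul_assoc, mul_assoc]
  rw [hsq, ← mul_assoc, hcomm.eq, mul_assoc, mul_assoc, hMK]
  simp only [mul_assoc]

def weightedLaplacian (W : Matrix ι ι ℝ) : Matrix ι ι ℝ :=
  diagonal (fun i => ∑ j, W i j) - W

theorem two_mul_dotProduct_weightedLaplacian_mulVec (W : Matrix ι ι ℝ) (hW : W.IsSymm)
    (v : ι → ℝ) :
    2 * (v ⬝ᵥ (weightedLaplacian W *ᵥ v)) = ∑ i, ∑ j, W i j * (v i - v j) ^ 2 := by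
  have hswap : ∑ i, ∑ j, W i j * v j ^ 2 = ∑ i, ∑ j, W i j * v i ^ 2 := by
    rw [Finset.sum_comm]
    exact Finset.sum_congr rfl fun i _ => Finset.sum_congr rfl fun j _ => by
      rw [← hW.apply j i]
  have hexpand : v ⬝ᵥ (weightedLaplacian W *ᵥ v) = ∑ i, ∑ j, W i j * (v i ^ 2 - v i * v j) := by
    simp only [weightedLaplacian, sub_mulVec, dotProduct_sub]
    simp only [dotProduct, mulVec_diagonal]
    simp only [mulVec, dotProduct, Finset.sum_mul, Finset.mul_sum, ← Finset.sum_sub_distrib]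
    exact Finset.sum_congr rfl fun i _ => Finset.sum_congr rfl fun j _ => by ring
  calc 2 * (v ⬝ᵥ (weightedLaplacian W *ᵥ v))
      = ∑ i, ∑ j, W i j * (v i ^ 2 - v i * v j) + ∑ i, ∑ j, W i j * (v j ^ 2 - v i * v j) := by
        simp only [mul_sub, Finset.sum_sub_distrib, hswap, hexpand]
        ring
    _ = ∑ i, ∑ j, W i j * (v i - v j) ^ 2 := by
        rw [← Finset.sum_add_distrib]
        exact Finset.sum_congr rfl fun i _ => by
          rw [← Finset.sum_add_distrib]
          exact Finset.sum_congr rfl fun j _ => by ring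

theorem dotProduct_weightedLaplacian_mulVec_nonneg (W : Matrix ι ι ℝ) (hW : W.IsSymm)
    (hWnn : ∀ i j, 0 ≤ W i j) (v : ι → ℝ) :
    0 ≤ v ⬝ᵥ (weightedLaplacian W *ᵥ v) := by
  have hsum : 0 ≤ ∑ i, ∑ j, W i j * (v i - v j) ^ 2 :=
    Finset.sum_nonneg fun i _ => Finset.sum_nonneg fun j _ => mul_nonneg (hWnn i j) (sq_nonneg _)
  linarith [two_mul_dotProduct_weightedLaplacian_mulVec W hW v]

end Matrix

theorem probability_mass_nonincreasing_general
    {n : ℕ} (W : Matrix (Fin n) (Fin n) ℝ) (hWsymm : W.IsSymm)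
    (hWnn : ∀ i j, 0 ≤ W i j) (d τ : Fin n → ℝ)
    (hd : ∀ i, d i = ∑ j, W i j) (hdpos : ∀ i, 0 < d i) (hτ : ∀ i, 0 < τ i)
    (S : Finset (Fin n)) :
    let LRW : Matrix (Fin n) (Fin n) ℝ :=
      (Matrix.diagonal d - W) * Matrix.diagonal (fun i => (d i * τ i)⁻¹)
    let μ : Fin n → ℝ :=
      fun i => if i ∈ S then d i * τ i / (∑ j ∈ S, d j * τ j) else 0
    let Θ : ℝ → ℝ := fun t => ∑ i ∈ S, (NormedSpace.exp ((-t) • LRW) *ᵥ μ) i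
    ∀ t : ℝ, 0 ≤ t → deriv Θ t ≤ 0 := by
  intro LRW μ Θ t _
  set χ : Fin n → ℝ := fun i => if i ∈ S then 1 else 0
  set L := diagonal d - W
  set M := diagonal (fun i => (d i * τ i)⁻¹)
  set K := exp ((-(t / 2)) • LRW)
  have hΘ : Θ = fun s => χ ⬝ᵥ (exp ((-s) • LRW) *ᵥ μ) := by
    funext s
    simp [Θ, χ, dotProduct, ite_mul]
  have hMμ : M *ᵥ μ = (∑ j ∈ S, d j * τ j)⁻¹ • χ := by
    funext i
    by_cases hi : i ∈ S
    · simp only [M, μ, χ, hi, mulVec_diagonal, if_true, Pi.smul_apply, smul_eq_mul, mul_one]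
      field_simp [(hdpos i).ne', (hτ i).ne']
    · simp [M, μ, χ, hi, mulVec_diagonal]
  have hflow : LRW * exp ((-t) • LRW) = K * L * Kᵀ * M := by
    have hL : Lᵀ = L := by rw [transpose_sub, diagonal_transpose, hWsymm]
    rw [show -t = 2 * -(t / 2) by ring]
    exact mul_exp_two_smul_eq L M hL (diagonal_transpose _) (-(t / 2))
  have hquad : 0 ≤ (Kᵀ *ᵥ χ) ⬝ᵥ (L *ᵥ (Kᵀ *ᵥ χ)) := by
    obtain rfl : d = fun i => ∑ j, W i j := funext hd
    exact dotProduct_weightedLaplacian_mulVec_nonneg W hWsymm hWnn _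
  rw [hΘ, (hasDerivAt_dotProduct_exp_neg_smul_mulVec LRW χ μ t).deriv, neg_nonpos, hflow,
    ← mulVec_mulVec, ← mulVec_mulVec, ← mulVec_mulVec, hMμ, dotProduct_mulVec,
    ← mulVec_transpose, mulVec_smul, mulVec_smul, dotProduct_smul, smul_eq_mul]
  exact mul_nonneg (inv_nonneg.2 (Finset.sum_nonneg fun j _ => (mul_pos (hdpos j) (hτ j)).le)) hquad

/-- for the continuous-time random walk started from the degree-weighted
distribution `μ = (D_W T) χ_S / vol_L(S)` on a set `S` with `vol_L(S) ≤ vol_L(V)/2`,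
the total probability mass `Θ_μ(t,S)` in `S` is nonincreasing: `dΘ/dt ≤ 0`. -/
theorem probability_mass_nonincreasing
    {n : ℕ} (W : Matrix (Fin n) (Fin n) ℝ) (hWsymm : W.IsSymm)
    (hWnn : ∀ i j, 0 ≤ W i j) (d τ : Fin n → ℝ)
    (hd : ∀ i, d i = ∑ j, W i j) (hdpos : ∀ i, 0 < d i) (hτ : ∀ i, 0 < τ i)
    (S : Finset (Fin n)) (hS : S.Nonempty)
    (hvol : ∑ i ∈ S, d i * τ i ≤ (∑ i, d i * τ i) / 2) :
    let LRW : Matrix (Fin n) (Fin n) ℝ :=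
      (Matrix.diagonal d - W) * Matrix.diagonal (fun i => (d i * τ i)⁻¹)
    let μ : Fin n → ℝ :=
      fun i => if i ∈ S then d i * τ i / (∑ j ∈ S, d j * τ j) else 0
    let Θ : ℝ → ℝ := fun t => ∑ i ∈ S, (NormedSpace.exp ((-t) • LRW) *ᵥ μ) i
    ∀ t : ℝ, 0 ≤ t → deriv Θ t ≤ 0 :=
  probability_mass_nonincreasing_general W hWsymm hWnn d τ hd hdpos hτ S
end

section
/- With the setup of the previous lemma (initial distribution μ = (D_W T)χ_S / vol_L(S), subset S with vol_L(S) ≤ vol_L(V)/2), the escape rate is bounded by the generalized conductance: |dΘ_μ(t,S)/dt| ≤ h_L(S) for all t ≥ 0, where h_L(S) = cut_W(S,S̄)/vol_L(S). -/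
/-!
With `D = diagonal (d τ)`, the random-walk Laplacian `(D_W - W) D⁻¹` is conjugate, via `D^{1/2}`,
to the positive semidefinite matrix `A = D^{-1/2} (D_W - W) D^{-1/2}`, and
`Θ(t) = vᵀ e^{-tA} v / vol_L(S)` with `v = D^{1/2} χ_S`. Hence `Θ'(t) = -ψ(t) / vol_L(S)` where
`ψ(t) = vᵀ e^{-tA} A v`. Splitting `e^{-tA} = e^{-tA/2} e^{-tA/2}` shows `ψ ≥ 0` and
`ψ' = -|A e^{-tA/2} v|² ≤ 0`, so `|Θ'(t)| ≤ ψ(0) / vol_L(S) = χ_Sᵀ (D_W - W) χ_S / vol_L(S)`,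
which is `cut_W(S, S̄) / vol_L(S)`.
-/

open Matrix NormedSpace

namespace Matrix

variable {ι : Type*} [Fintype ι] [DecidableEq ι]

section ExpCalculus

attribute [local instance] Matrix.linftyOpNormedRing Matrix.linftyOpNormedAlgebra

theorem hasDerivAt_dotProduct_exp_smul_mulVec (A : Matrix ι ι ℝ) (v w : ι → ℝ) (t : ℝ) :
    HasDerivAt (fun u : ℝ => v ⬝ᵥ (exp (u • A) *ᵥ w)) (v ⬝ᵥ ((exp (t • A) * A) *ᵥ w)) t := by
  let f : Matrix ι ι ℝ →ₗ[ℝ] ℝ :=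
    { toFun := fun M => v ⬝ᵥ (M *ᵥ w)
      map_add' := fun M N => by simp only [add_mulVec, dotProduct_add]
      map_smul' := fun c M => by simp only [smul_mulVec, dotProduct_smul, RingHom.id_apply] }
  exact f.toContinuousLinearMap.hasFDerivAt.comp_hasDerivAt t (hasDerivAt_exp_smul_const A t)

theorem commute_exp_smul_neg_self (A : Matrix ι ι ℝ) (u : ℝ) : Commute (exp (u • -A)) A :=
  ((Commute.refl A).neg_left.smul_left u).exp_left

theorem exp_smul_eq_exp_half_smul_mul_self (A : Matrix ι ι ℝ) (u : ℝ) :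
    exp (u • A) = exp ((u / 2) • A) * exp ((u / 2) • A) := by
  rw [← exp_add_of_commute _ _ (Commute.refl _), ← add_smul, add_halves]

end ExpCalculus

section HeatSemigroup

variable {A : Matrix ι ι ℝ}

theorem IsHermitian.exp_smul_neg (hA : A.IsHermitian) (u : ℝ) :
    (NormedSpace.exp (u • -A)).IsHermitian :=
  (hA.neg.smul (IsSelfAdjoint.all u)).exp

theorem PosSemidef.exp_smul_neg_mul (hA : A.PosSemidef) (u : ℝ) :
    (exp (u • -A) * A).PosSemidef := by
  have hF : (exp ((u / 2) • -A))ᴴ = exp ((u / 2) • -A) := hA.isHermitian.exp_smul_neg (u / 2)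
  have : exp (u • -A) * A = (exp ((u / 2) • -A))ᴴ * A * exp ((u / 2) • -A) := by
    rw [hF, exp_smul_eq_exp_half_smul_mul_self, mul_assoc, mul_assoc,
      ← (commute_exp_smul_neg_self A _).eq]
  rw [this]
  exact hA.conjTranspose_mul_mul_same _

theorem IsHermitian.exp_smul_neg_mul_mul_self (hA : A.IsHermitian) (u : ℝ) :
    (NormedSpace.exp (u • -A) * A * A).PosSemidef := by
  set F := NormedSpace.exp ((u / 2) • -A)
  have hF : Fᴴ = F := hA.exp_smul_neg (u / 2)
  have hFA : F * A = A * F := (commute_exp_smul_neg_self A _).eq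
  have : NormedSpace.exp (u • -A) * A * A = (F * A)ᴴ * (F * A) := by
    rw [conjTranspose_mul, hF, hA.eq, ← hFA, exp_smul_eq_exp_half_smul_mul_self, mul_assoc F A,
      ← mul_assoc A, ← hFA]
    simp only [mul_assoc, F]
  rw [this]
  exact posSemidef_conjTranspose_mul_self _

theorem IsHermitian.antitone_dotProduct_exp_smul_neg_mul_mulVec (hA : A.IsHermitian)
    (v : ι → ℝ) : Antitone fun u : ℝ => v ⬝ᵥ ((NormedSpace.exp (u • -A) * A) *ᵥ v) := by
  have hderiv (u : ℝ) : HasDerivAt (fun u : ℝ => v ⬝ᵥ ((NormedSpace.exp (u • -A) * A) *ᵥ v))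
      (-(v ⬝ᵥ ((NormedSpace.exp (u • -A) * A * A) *ᵥ v))) u := by
    simp only [← mulVec_mulVec]
    convert hasDerivAt_dotProduct_exp_smul_mulVec (-A) v (A *ᵥ v) u using 1
    rw [mul_neg, neg_mulVec, mulVec_mulVec, dotProduct_neg]
  refine antitone_of_hasDerivAt_nonpos hderiv fun u => neg_nonpos.mpr ?_
  simpa using (hA.exp_smul_neg_mul_mul_self u).dotProduct_mulVec_nonneg v

theorem PosSemidef.abs_deriv_dotProduct_exp_smul_neg_mulVec_le (hA : A.PosSemidef)
    (v : ι → ℝ) {t : ℝ} (ht : 0 ≤ t) :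
    |deriv (fun u : ℝ => v ⬝ᵥ (exp (u • -A) *ᵥ v)) t| ≤ v ⬝ᵥ (A *ᵥ v) := by
  have hflux_nonneg : 0 ≤ v ⬝ᵥ ((exp (t • -A) * A) *ᵥ v) := by
    simpa using (hA.exp_smul_neg_mul t).dotProduct_mulVec_nonneg v
  have hflux_le : v ⬝ᵥ ((exp (t • -A) * A) *ᵥ v) ≤ v ⬝ᵥ (A *ᵥ v) := by
    simpa using hA.isHermitian.antitone_dotProduct_exp_smul_neg_mul_mulVec v ht
  rw [(hasDerivAt_dotProduct_exp_smul_mulVec (-A) v v t).deriv, mul_neg, neg_mulVec,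
    dotProduct_neg, abs_neg, abs_of_nonneg hflux_nonneg]
  exact hflux_le

end HeatSemigroup

section Laplacian

variable {W : Matrix ι ι ℝ} {d : ι → ℝ}

theorem two_mul_dotProduct_diagonal_sub_mulVec (hW : W.IsSymm) (hd : ∀ i, d i = ∑ j, W i j)
    (x : ι → ℝ) :
    2 * (x ⬝ᵥ ((diagonal d - W) *ᵥ x)) = ∑ i, ∑ j, W i j * (x i - x j) ^ 2 := by
  have hswap :
      ∑ i, ∑ j, W i j * (x j * (x j - x i)) = ∑ i, ∑ j, W i j * (x i * (x i - x j)) := by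
    rw [Finset.sum_comm]
    simp only [hW.apply]
  have hrow (i : ι) : ((diagonal d - W) *ᵥ x) i = ∑ j, W i j * (x i - x j) := by
    rw [sub_mulVec, Pi.sub_apply, mulVec_diagonal, hd, Finset.sum_mul]
    simp only [mulVec, dotProduct, ← Finset.sum_sub_distrib, mul_sub]
  calc 2 * (x ⬝ᵥ ((diagonal d - W) *ᵥ x))
      = 2 * ∑ i, ∑ j, W i j * (x i * (x i - x j)) := by
        simp only [dotProduct, hrow, Finset.mul_sum]
        exact Finset.sum_congr rfl fun i _ => Finset.sum_congr rfl fun j _ => by ring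
    _ = ∑ i, ∑ j, (W i j * (x i * (x i - x j)) + W i j * (x j * (x j - x i))) := by
        simp only [Finset.sum_add_distrib, hswap]; ring
    _ = ∑ i, ∑ j, W i j * (x i - x j) ^ 2 :=
        Finset.sum_congr rfl fun i _ => Finset.sum_congr rfl fun j _ => by ring

theorem posSemidef_diagonal_sub (hW : W.IsSymm) (hW_nonneg : ∀ i j, 0 ≤ W i j)
    (hd : ∀ i, d i = ∑ j, W i j) : (diagonal d - W).PosSemidef := by
  refine .of_dotProduct_mulVec_nonneg ((isHermitian_diagonal d).sub
    (isHermitian_iff_isSymm.mpr hW)) fun x => ?_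
  have h := two_mul_dotProduct_diagonal_sub_mulVec hW hd x
  have : 0 ≤ ∑ i, ∑ j, W i j * (x i - x j) ^ 2 :=
    Finset.sum_nonneg fun i _ => Finset.sum_nonneg fun j _ =>
      mul_nonneg (hW_nonneg i j) (sq_nonneg _)
  rw [star_trivial]
  linarith

theorem indicator_dotProduct_diagonal_sub_mulVec_indicator (hd : ∀ i, d i = ∑ j, W i j)
    (S : Finset ι) :
    (fun i => if i ∈ S then (1 : ℝ) else 0) ⬝ᵥ
        ((diagonal d - W) *ᵥ fun i => if i ∈ S then 1 else 0) =
      ∑ i ∈ S, ∑ j ∈ Sᶜ, W i j := by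
  simp only [dotProduct, ite_mul, one_mul, zero_mul, Finset.sum_ite_mem, Finset.univ_inter]
  refine Finset.sum_congr rfl fun i hi => ?_
  rw [sub_mulVec, Pi.sub_apply, mulVec_diagonal, if_pos hi, mul_one, hd,
    ← Finset.sum_add_sum_compl S (W i)]
  simp [mulVec, dotProduct, Finset.sum_ite_mem]

end Laplacian

section SymmNormalize

noncomputable def symmNormalize (L : Matrix ι ι ℝ) (m : ι → ℝ) : Matrix ι ι ℝ :=
  diagonal (fun i => (√(m i))⁻¹) * L * diagonal (fun i => (√(m i))⁻¹)

variable {m : ι → ℝ}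

theorem PosSemidef.symmNormalize {L : Matrix ι ι ℝ} (hL : L.PosSemidef) (m : ι → ℝ) :
    (L.symmNormalize m).PosSemidef := by
  simpa [Matrix.symmNormalize] using hL.conjTranspose_mul_mul_same (diagonal fun i => (√(m i))⁻¹)

theorem mul_diagonal_inv_eq_conj_symmNormalize (L : Matrix ι ι ℝ) (hm : ∀ i, 0 < m i) :
    L * diagonal (fun i => (m i)⁻¹) =
      diagonal (fun i => √(m i)) * L.symmNormalize m * diagonal (fun i => (√(m i))⁻¹) := by
  have hsq (i : ι) : (√(m i))⁻¹ * (√(m i))⁻¹ = (m i)⁻¹ := by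
    rw [← mul_inv, Real.mul_self_sqrt (hm i).le]
  have hcancel (i : ι) : √(m i) * (√(m i))⁻¹ = 1 :=
    mul_inv_cancel₀ (Real.sqrt_pos.mpr (hm i)).ne'
  simp only [Matrix.symmNormalize, Matrix.mul_assoc, diagonal_mul_diagonal, hsq]
  simp only [← Matrix.mul_assoc, diagonal_mul_diagonal, hcancel, diagonal_one, Matrix.one_mul]

theorem exp_smul_mul_diagonal_inv (L : Matrix ι ι ℝ) (hm : ∀ i, 0 < m i) (c : ℝ) :
    exp (c • (L * diagonal fun i => (m i)⁻¹)) =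
      diagonal (fun i => √(m i)) * exp (c • L.symmNormalize m) *
        diagonal (fun i => (√(m i))⁻¹) := by
  have hsqrt (i : ι) : √(m i) ≠ 0 := (Real.sqrt_pos.mpr (hm i)).ne'
  have hunit : IsUnit (diagonal fun i => √(m i)) :=
    isUnit_diagonal.mpr (Pi.isUnit_iff.mpr fun i => (hsqrt i).isUnit)
  have hinv : (diagonal fun i => √(m i))⁻¹ = diagonal fun i => (√(m i))⁻¹ :=
    inv_eq_right_inv (by simp [diagonal_mul_diagonal, hsqrt])
  rw [mul_diagonal_inv_eq_conj_symmNormalize L hm, ← hinv, ← Matrix.smul_mul, ← Matrix.mul_smul,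
    exp_conj _ _ hunit]

theorem dotProduct_symmNormalize_mulVec (L : Matrix ι ι ℝ) (hm : ∀ i, 0 < m i) (x : ι → ℝ) :
    (fun i => √(m i) * x i) ⬝ᵥ (L.symmNormalize m *ᵥ fun i => √(m i) * x i) = x ⬝ᵥ (L *ᵥ x) := by
  have hsqrt (i : ι) : √(m i) ≠ 0 := (Real.sqrt_pos.mpr (hm i)).ne'
  have hmulVec : (diagonal fun i => (√(m i))⁻¹) *ᵥ (fun i => √(m i) * x i) = x := by
    funext i
    rw [mulVec_diagonal, inv_mul_cancel_left₀ (hsqrt i)]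
  have hvecMul : (fun i => √(m i) * x i) ᵥ* (diagonal fun i => (√(m i))⁻¹) = x := by
    funext i
    rw [vecMul_diagonal, mul_comm, inv_mul_cancel_left₀ (hsqrt i)]
  rw [Matrix.symmNormalize, ← mulVec_mulVec, ← mulVec_mulVec, hmulVec, dotProduct_mulVec,
    hvecMul]

theorem sum_exp_neg_smul_mul_diagonal_inv_mulVec (L : Matrix ι ι ℝ) (hm : ∀ i, 0 < m i)
    (S : Finset ι) (c t : ℝ) :
    ∑ i ∈ S, (exp ((-t) • (L * diagonal fun i => (m i)⁻¹)) *ᵥ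
        fun i => if i ∈ S then m i / c else 0) i =
      c⁻¹ * ((fun i => √(m i) * if i ∈ S then 1 else 0) ⬝ᵥ
        (exp (t • -L.symmNormalize m) *ᵥ fun i => √(m i) * if i ∈ S then 1 else 0)) := by
  set v : ι → ℝ := fun i => √(m i) * if i ∈ S then 1 else 0
  have hμ : (diagonal fun i => (√(m i))⁻¹) *ᵥ (fun i => if i ∈ S then m i / c else 0) =
      c⁻¹ • v := by
    funext i
    have hsqrt := (Real.sqrt_pos.mpr (hm i)).ne'
    simp only [mulVec_diagonal, v, Pi.smul_apply, smul_eq_mul]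
    split_ifs
    · field_simp
      rw [Real.sq_sqrt (hm i).le]
    · simp
  have hsum (y : ι → ℝ) : ∑ i ∈ S, ((diagonal fun i => √(m i)) *ᵥ y) i = v ⬝ᵥ y := by
    simp [mulVec_diagonal, dotProduct, v, Finset.sum_ite_mem]
  rw [exp_smul_mul_diagonal_inv L hm, neg_smul, ← smul_neg, ← mulVec_mulVec, ← mulVec_mulVec, hμ,
    hsum, mulVec_smul, dotProduct_smul, smul_eq_mul]

end SymmNormalize

end Matrix

theorem escape_rate_bounded_by_conductance_general
    {n : ℕ} (W : Matrix (Fin n) (Fin n) ℝ) (hWsymm : W.IsSymm)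
    (hWnn : ∀ i j, 0 ≤ W i j) (d τ : Fin n → ℝ)
    (hd : ∀ i, d i = ∑ j, W i j) (hdpos : ∀ i, 0 < d i) (hτ : ∀ i, 0 < τ i)
    (S : Finset (Fin n)) :
    let LRW : Matrix (Fin n) (Fin n) ℝ :=
      (Matrix.diagonal d - W) * Matrix.diagonal (fun i => (d i * τ i)⁻¹)
    let μ : Fin n → ℝ :=
      fun i => if i ∈ S then d i * τ i / (∑ j ∈ S, d j * τ j) else 0
    let Θ : ℝ → ℝ := fun t => ∑ i ∈ S, (NormedSpace.exp ((-t) • LRW) *ᵥ μ) i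
    ∀ t : ℝ, 0 ≤ t →
      |deriv Θ t| ≤ (∑ i ∈ S, ∑ j ∈ Sᶜ, W i j) / (∑ i ∈ S, d i * τ i) := by
  intro LRW μ Θ t ht
  have hm (i : Fin n) : 0 < d i * τ i := mul_pos (hdpos i) (hτ i)
  set A := (diagonal d - W).symmNormalize fun i => d i * τ i
  set v : Fin n → ℝ := fun i => √(d i * τ i) * if i ∈ S then 1 else 0
  have hΘ : Θ = fun u => (∑ i ∈ S, d i * τ i)⁻¹ * (v ⬝ᵥ (exp (u • -A) *ᵥ v)) :=
    funext (sum_exp_neg_smul_mul_diagonal_inv_mulVec _ hm S _)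
  have hA : A.PosSemidef := (posSemidef_diagonal_sub hWsymm hWnn hd).symmNormalize _
  have hvol : 0 ≤ ∑ i ∈ S, d i * τ i := Finset.sum_nonneg fun i _ => (hm i).le
  rw [hΘ, deriv_const_mul_field', abs_mul, abs_inv, abs_of_nonneg hvol, div_eq_inv_mul]
  gcongr
  calc _ ≤ v ⬝ᵥ (A *ᵥ v) := hA.abs_deriv_dotProduct_exp_smul_neg_mulVec_le v ht
    _ = _ := dotProduct_symmNormalize_mulVec _ hm _
    _ = _ := indicator_dotProduct_diagonal_sub_mulVec_indicator hd S

/-- the escape rate of the random walk from `S` is bounded by the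
generalized conductance: `|dΘ_μ(t,S)/dt| ≤ h_L(S) = cut_W(S,S̄)/vol_L(S)`. -/
theorem escape_rate_bounded_by_conductance
    {n : ℕ} (W : Matrix (Fin n) (Fin n) ℝ) (hWsymm : W.IsSymm)
    (hWnn : ∀ i j, 0 ≤ W i j) (d τ : Fin n → ℝ)
    (hd : ∀ i, d i = ∑ j, W i j) (hdpos : ∀ i, 0 < d i) (hτ : ∀ i, 0 < τ i)
    (S : Finset (Fin n)) (hS : S.Nonempty)
    (hvol : ∑ i ∈ S, d i * τ i ≤ (∑ i, d i * τ i) / 2) :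
    let LRW : Matrix (Fin n) (Fin n) ℝ :=
      (Matrix.diagonal d - W) * Matrix.diagonal (fun i => (d i * τ i)⁻¹)
    let μ : Fin n → ℝ :=
      fun i => if i ∈ S then d i * τ i / (∑ j ∈ S, d j * τ j) else 0
    let Θ : ℝ → ℝ := fun t => ∑ i ∈ S, (NormedSpace.exp ((-t) • LRW) *ᵥ μ) i
    ∀ t : ℝ, 0 ≤ t →
      |deriv Θ t| ≤ (∑ i ∈ S, ∑ j ∈ Sᶜ, W i j) / (∑ i ∈ S, d i * τ i) :=
  escape_rate_bounded_by_conductance_general W hWsymm hWnn d τ hd hdpos hτ S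
end
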